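/- arXiv:0812.1719 — 5 statements merged into one kernel-verified Lean document; each statement's English description precedes it below -/
import Mathlib

section
/- Let (X_k)_{1≤k≤n} be a sequence of martingale differences adapted to a filtration (F_k). Assume there exist constants Q ≥ 1, δ > 0 and K > 0 such that for all k ∈ {1,…,n}, almost surely E[exp(δ|X_k|^Q) | F_{k-1}] ≤ K. Then there exists a constant c > 0, depending only on Q, δ and K, such that for all x > 0: P[S_n/n > x] ≤ exp(−n c x²) if 0 < x ≤ 1, and P[S_n/n > x] ≤ exp(−n c x^Q) if x > 1; the same bounds hold for P[−S_n/n > x]. -/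
/-!
Chernoff's method along the filtration. If `E[exp (l X_k) | F_{k-1}] ≤ M` for every `k`, then
conditioning successively on `F_{n-1}, …, F_0` gives `E[exp (l S_n)] ≤ M ^ n`, hence
`P(S_n > n x) ≤ exp (-l n x) M ^ n`; truncating the increments from above first keeps all the
products integrable. Two bounds on the conditional moment generating function feed this.

* For `0 ≤ l ≤ δ / 2`, `exp u ≤ 1 + u + u² exp |u|` and the vanishing conditional mean give
  `E[exp (l X) | F] ≤ 1 + A l²` with `A = 16 e^δ K / δ²`; taking `l` proportional to `x` gives
  `exp (-c n x²)` for `x ≤ 1`.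
* For `a ≥ 0`, `a^(Q-1) t ≤ t^Q + a^Q` gives `E[exp (δ a^(Q-1) X) | F] ≤ K exp (δ a^Q)`, and
  `a = x / 2` gives `K^n exp (-n δ (x/2)^Q)`. This is `exp (-c n x^Q)` as soon as `x^Q` dominates
  `log K`; below that threshold the bound at `x = 1` already suffices.

The lower tail is the upper tail of `-X`.
-/

open MeasureTheory ProbabilityTheory Real Finset

theorem Real.exp_le_one_add_add_sq_mul_exp_abs (u : ℝ) : exp u ≤ 1 + u + u ^ 2 * exp |u| := by
  have h : exp u * (1 - u) ≤ 1 := by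
    calc exp u * (1 - u) ≤ exp u * exp (-u) := by
          gcongr; linarith [add_one_le_exp (-u)]
      _ = 1 := by rw [← exp_add, add_neg_cancel, exp_zero]
  rcases le_total 0 u with hu | hu
  · rw [abs_of_nonneg hu]
    nlinarith [mul_le_mul_of_nonneg_left h hu]
  · rw [abs_of_nonpos hu]
    nlinarith [add_one_le_exp u, exp_pos (-u), add_one_le_exp (-u)]

theorem Real.rpow_sub_one_mul_le_rpow_add_rpow {Q a t : ℝ} (hQ : 1 ≤ Q) (ha : 0 ≤ a)
    (ht : 0 ≤ t) : a ^ (Q - 1) * t ≤ t ^ Q + a ^ Q := by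
  have hQ' : Q - 1 + 1 ≠ 0 := by linarith
  rcases le_total t a with hta | hat
  · calc a ^ (Q - 1) * t ≤ a ^ (Q - 1) * a := by gcongr
      _ = a ^ Q := by rw [← rpow_add_one' ha hQ', sub_add_cancel]
      _ ≤ t ^ Q + a ^ Q := le_add_of_nonneg_left (rpow_nonneg ht Q)
  · calc a ^ (Q - 1) * t ≤ t ^ (Q - 1) * t := by gcongr
      _ = t ^ Q := by rw [← rpow_add_one' ht hQ', sub_add_cancel]
      _ ≤ t ^ Q + a ^ Q := le_add_of_nonneg_right (rpow_nonneg ha Q)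

theorem Real.sq_mul_exp_mul_le {Q δ l t : ℝ} (hQ : 1 ≤ Q) (hδ : 0 < δ) (hl : l ≤ δ / 2)
    (ht : 0 ≤ t) : t ^ 2 * exp (l * t) ≤ 16 * exp δ / δ ^ 2 * exp (δ * t ^ Q) := by
  have hsq : (δ / 4 * t) ^ 2 ≤ exp (δ / 2 * t) := by
    calc (δ / 4 * t) ^ 2 ≤ exp (δ / 4 * t) ^ 2 := by
          gcongr
          linarith [add_one_le_exp (δ / 4 * t)]
      _ = exp (δ / 2 * t) := by rw [← exp_nat_mul]; ring_nf
  have hlin : t ≤ 1 + t ^ Q := by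
    simpa [add_comm] using rpow_sub_one_mul_le_rpow_add_rpow hQ zero_le_one ht
  calc t ^ 2 * exp (l * t) = 16 / δ ^ 2 * ((δ / 4 * t) ^ 2 * exp (l * t)) := by
        field_simp; ring
    _ ≤ 16 / δ ^ 2 * (exp (δ / 2 * t) * exp (δ / 2 * t)) := by gcongr
    _ = 16 / δ ^ 2 * exp (δ * t) := by rw [← exp_add]; ring_nf
    _ ≤ 16 / δ ^ 2 * exp (δ * (1 + t ^ Q)) := by gcongr
    _ = 16 * exp δ / δ ^ 2 * exp (δ * t ^ Q) := by rw [mul_add, mul_one, exp_add]; ring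

theorem Real.exp_mul_le_one_add_mul_add_sq_mul_exp_rpow {Q δ l : ℝ} (hQ : 1 ≤ Q) (hδ : 0 < δ)
    (hl0 : 0 ≤ l) (hl : l ≤ δ / 2) (y : ℝ) :
    exp (l * y) ≤ 1 + l * y + 16 * exp δ / δ ^ 2 * l ^ 2 * exp (δ * |y| ^ Q) := by
  calc exp (l * y) ≤ 1 + l * y + l ^ 2 * (|y| ^ 2 * exp (l * |y|)) := by
        have := exp_le_one_add_add_sq_mul_exp_abs (l * y)
        rwa [abs_mul, abs_of_nonneg hl0, mul_pow, ← sq_abs y, mul_assoc] at this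
    _ ≤ 1 + l * y + l ^ 2 * (16 * exp δ / δ ^ 2 * exp (δ * |y| ^ Q)) := by
        gcongr 1 + l * y + l ^ 2 * ?_
        exact sq_mul_exp_mul_le hQ hδ hl (abs_nonneg y)
    _ = _ := by ring

theorem Real.exp_mul_rpow_sub_one_mul_le {Q δ a : ℝ} (hQ : 1 ≤ Q) (hδ : 0 ≤ δ) (ha : 0 ≤ a)
    (y : ℝ) : exp (δ * a ^ (Q - 1) * y) ≤ exp (δ * a ^ Q) * exp (δ * |y| ^ Q) := by
  rw [← exp_add, ← mul_add, mul_assoc]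
  gcongr
  calc a ^ (Q - 1) * y ≤ a ^ (Q - 1) * |y| := by gcongr; exact le_abs_self y
    _ ≤ |y| ^ Q + a ^ Q := rpow_sub_one_mul_le_rpow_add_rpow hQ ha (abs_nonneg y)
    _ = a ^ Q + |y| ^ Q := add_comm _ _

theorem ae_condExp_le_of_le_add_mul {Ω : Type*} {m m0 : MeasurableSpace Ω} {μ : Measure Ω}
    [IsFiniteMeasure μ] (hm : m ≤ m0) {f X g : Ω → ℝ} {a b c K : ℝ} (hc : 0 ≤ c)
    (hf : AEStronglyMeasurable f μ) (hf0 : 0 ≤ f) (hX : Integrable X μ) (hX0 : μ[X|m] =ᵐ[μ] 0)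
    (hg : Integrable g μ) (hgK : ∀ᵐ ω ∂μ, μ[g|m] ω ≤ K)
    (hfg : ∀ ω, f ω ≤ a + b * X ω + c * g ω) :
    Integrable f μ ∧ ∀ᵐ ω ∂μ, μ[f|m] ω ≤ a + c * K := by
  have hbX : Integrable (b • X) μ := hX.smul b
  have hcg : Integrable (c • g) μ := hg.smul c
  have hdom : Integrable ((fun _ => a) + b • X + c • g) μ :=
    ((integrable_const a).add hbX).add hcg
  have hfint : Integrable f μ :=
    hdom.mono' hf (ae_of_all _ fun ω => by rw [norm_of_nonneg (hf0 ω)]; exact hfg ω)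
  refine ⟨hfint, ?_⟩
  filter_upwards [condExp_mono (m := m) hfint hdom (ae_of_all _ hfg),
    condExp_add ((integrable_const a).add hbX) hcg m, condExp_add (integrable_const a) hbX m,
    condExp_smul (μ := μ) b X m, condExp_smul (μ := μ) c g m, hX0, hgK]
    with ω hmono hadd₁ hadd₂ hsmul₁ hsmul₂ hX0ω hgKω
  rw [hadd₁, Pi.add_apply, hadd₂, Pi.add_apply, hsmul₁, hsmul₂, condExp_const hm] at hmono
  simp only [Pi.smul_apply, smul_eq_mul, hX0ω, Pi.zero_apply, mul_zero, add_zero] at hmono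
  linarith [mul_le_mul_of_nonneg_left hgKω hc]

section Chernoff

variable {Ω : Type*} {m0 : MeasurableSpace Ω} {μ : Measure Ω} [IsProbabilityMeasure μ]
  {ℱ : Filtration ℕ m0}

theorem integral_prod_le_pow_of_condExp_le {n : ℕ} {Y : ℕ → Ω → ℝ} {C M : ℝ} (hM : 0 ≤ M)
    (hY : ∀ k ∈ Icc 1 n, StronglyMeasurable[ℱ k] (Y k)) (hY0 : ∀ k ω, 0 ≤ Y k ω)
    (hYC : ∀ k ω, Y k ω ≤ C) (hYM : ∀ k ∈ Icc 1 n, ∀ᵐ ω ∂μ, μ[Y k|ℱ (k - 1)] ω ≤ M) :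
    Integrable (fun ω => ∏ k ∈ Icc 1 n, Y k ω) μ ∧ ∫ ω, ∏ k ∈ Icc 1 n, Y k ω ∂μ ≤ M ^ n := by
  induction n with
  | zero => simp
  | succ n ih =>
    have hsub : Icc 1 n ⊆ Icc 1 (n + 1) := Icc_subset_Icc_right n.le_succ
    have hlast : n + 1 ∈ Icc 1 (n + 1) := right_mem_Icc.2 n.succ_pos
    obtain ⟨hf, hfM⟩ := ih (fun k hk => hY k (hsub hk)) (fun k hk => hYM k (hsub hk))
    set f := fun ω => ∏ k ∈ Icc 1 n, Y k ω
    set g := Y (n + 1)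
    have hfm : StronglyMeasurable[ℱ n] f := stronglyMeasurable_fun_prod _ fun k hk =>
      (hY k (hsub hk)).mono (ℱ.mono (mem_Icc.1 hk).2)
    have hgm : AEStronglyMeasurable g μ := ((hY _ hlast).mono (ℱ.le _)).aestronglyMeasurable
    have hg_bdd : ∀ᵐ ω ∂μ, ‖g ω‖ ≤ C :=
      ae_of_all _ fun ω => by rw [norm_of_nonneg (hY0 _ ω)]; exact hYC _ ω
    have hprod : (fun ω => ∏ k ∈ Icc 1 (n + 1), Y k ω) = f * g := by
      ext ω; exact prod_Icc_succ_top (by omega) _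
    have hfg : Integrable (f * g) μ := by
      rw [mul_comm]; exact hf.bdd_mul hgm hg_bdd
    have hpull : μ[f * g|ℱ n] =ᵐ[μ] f * μ[g|ℱ n] :=
      condExp_mul_of_stronglyMeasurable_left hfm hfg (Integrable.of_bound hgm C hg_bdd)
    refine ⟨hprod ▸ hfg, ?_⟩
    calc ∫ ω, ∏ k ∈ Icc 1 (n + 1), Y k ω ∂μ = ∫ ω, (f * μ[g|ℱ n]) ω ∂μ := by
          rw [hprod, ← integral_condExp (ℱ.le n)]; exact integral_congr_ae hpull
      _ ≤ ∫ ω, f ω * M ∂μ := by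
          refine integral_mono_ae (integrable_condExp.congr hpull) (hf.mul_const M) ?_
          filter_upwards [hYM _ hlast] with ω hω
          exact mul_le_mul_of_nonneg_left hω (prod_nonneg fun k _ => hY0 k ω)
      _ ≤ M ^ n * M := by rw [integral_mul_const]; gcongr
      _ = M ^ (n + 1) := (pow_succ M n).symm

theorem measure_lt_sum_le_of_condExp_exp_le_of_bdd {n : ℕ} {X : ℕ → Ω → ℝ} {C l M : ℝ}
    (hl : 0 ≤ l) (hM : 0 ≤ M) (hX : ∀ k ∈ Icc 1 n, StronglyMeasurable[ℱ k] (X k))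
    (hXC : ∀ k ω, X k ω ≤ C)
    (hXM : ∀ k ∈ Icc 1 n, ∀ᵐ ω ∂μ, μ[fun ω' => exp (l * X k ω')|ℱ (k - 1)] ω ≤ M) (a : ℝ) :
    μ {ω | a < ∑ k ∈ Icc 1 n, X k ω} ≤ ENNReal.ofReal (exp (-(l * a)) * M ^ n) := by
  obtain ⟨hint, hle⟩ := integral_prod_le_pow_of_condExp_le (Y := fun k ω => exp (l * X k ω))
    (C := exp (l * C)) hM
    (fun k hk => continuous_exp.comp_stronglyMeasurable ((hX k hk).const_mul l))
    (fun _ _ => (exp_pos _).le)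
    (fun k ω => exp_le_exp.2 (mul_le_mul_of_nonneg_left (hXC k ω) hl)) hXM
  have hexp : ∀ ω, exp (l * ∑ k ∈ Icc 1 n, X k ω) = ∏ k ∈ Icc 1 n, exp (l * X k ω) :=
    fun ω => by rw [mul_sum, exp_sum]
  simp_rw [← hexp] at hint hle
  calc μ {ω | a < ∑ k ∈ Icc 1 n, X k ω} ≤ μ {ω | a ≤ ∑ k ∈ Icc 1 n, X k ω} :=
        measure_mono fun ω (hω : a < _) => hω.le
    _ = ENNReal.ofReal (μ.real {ω | a ≤ ∑ k ∈ Icc 1 n, X k ω}) := by rw [ofReal_measureReal]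
    _ ≤ ENNReal.ofReal (exp (-(l * a)) * M ^ n) := by
        gcongr
        calc μ.real {ω | a ≤ ∑ k ∈ Icc 1 n, X k ω}
            ≤ exp (-l * a) * mgf (fun ω => ∑ k ∈ Icc 1 n, X k ω) μ l :=
              measure_ge_le_exp_mul_mgf a hl hint
          _ ≤ exp (-(l * a)) * M ^ n := by rw [neg_mul]; gcongr; exact hle


theorem measure_lt_sum_le_of_condExp_exp_le {n : ℕ} {X : ℕ → Ω → ℝ} {l M : ℝ} (hl : 0 ≤ l)
    (hM : 0 ≤ M) (hX : ∀ k ∈ Icc 1 n, StronglyMeasurable[ℱ k] (X k))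
    (hint : ∀ k ∈ Icc 1 n, Integrable (fun ω => exp (l * X k ω)) μ)
    (hXM : ∀ k ∈ Icc 1 n, ∀ᵐ ω ∂μ, μ[fun ω' => exp (l * X k ω')|ℱ (k - 1)] ω ≤ M) (a : ℝ) :
    μ {ω | a < ∑ k ∈ Icc 1 n, X k ω} ≤ ENNReal.ofReal (exp (-(l * a)) * M ^ n) := by
  set T : ℕ → Set Ω := fun m => {ω | a < ∑ k ∈ Icc 1 n, min (X k ω) m}
  have hT : Monotone T := fun m m' hmm ω (hω : a < _) =>
    hω.trans_le (sum_le_sum fun k _ => min_le_min_left _ (Nat.mono_cast hmm))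
  have hunion : {ω | a < ∑ k ∈ Icc 1 n, X k ω} = ⋃ m, T m := by
    ext ω
    simp only [T, Set.mem_iUnion, Set.mem_ofPred_eq]
    refine ⟨fun h => ?_, fun ⟨m, hm⟩ => hm.trans_le (sum_le_sum fun k _ => min_le_left _ _)⟩
    obtain ⟨m, hm⟩ := exists_nat_ge (∑ k ∈ Icc 1 n, |X k ω|)
    refine ⟨m, ?_⟩
    rwa [sum_congr rfl fun k hk => min_eq_left ((le_abs_self _).trans
      ((single_le_sum (fun j _ => abs_nonneg (X j ω)) hk).trans hm))]
  rw [hunion, hT.measure_iUnion]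
  refine iSup_le fun m => ?_
  have hXm : ∀ k ∈ Icc 1 n, StronglyMeasurable[ℱ k] fun ω => min (X k ω) (m : ℝ) :=
    fun k hk => ((hX k hk).measurable.min measurable_const).stronglyMeasurable
  refine measure_lt_sum_le_of_condExp_exp_le_of_bdd hl hM hXm (fun k ω => min_le_right _ _)
    (fun k hk => ?_) a
  have hle : ∀ ω, exp (l * min (X k ω) m) ≤ exp (l * X k ω) :=
    fun ω => exp_le_exp.2 (mul_le_mul_of_nonneg_left (min_le_left _ _) hl)
  have htrunc : Integrable (fun ω => exp (l * min (X k ω) m)) μ :=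
    (hint k hk).mono' (continuous_exp.comp_aestronglyMeasurable
      (((hXm k hk).mono (ℱ.le k)).aestronglyMeasurable.const_mul l))
      (ae_of_all _ fun ω => by rw [norm_of_nonneg (exp_pos _).le]; exact hle ω)
  filter_upwards [condExp_mono (m := ℱ (k - 1)) htrunc (hint k hk) (ae_of_all _ hle), hXM k hk]
    with ω h₁ h₂ using h₁.trans h₂

end Chernoff

structure MartingaleDiffExpMoment {Ω : Type*} {m0 : MeasurableSpace Ω} (μ : Measure Ω)
    (ℱ : Filtration ℕ m0) (n : ℕ) (X : ℕ → Ω → ℝ) (Q δ K : ℝ) : Prop where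
  stronglyMeasurable : ∀ k ∈ Icc 1 n, StronglyMeasurable[ℱ k] (X k)
  integrable : ∀ k ∈ Icc 1 n, Integrable (X k) μ
  condExp_eq_zero : ∀ k ∈ Icc 1 n, μ[X k|ℱ (k - 1)] =ᵐ[μ] 0
  integrable_exp : ∀ k ∈ Icc 1 n, Integrable (fun ω => exp (δ * |X k ω| ^ Q)) μ
  condExp_exp_le : ∀ k ∈ Icc 1 n,
    ∀ᵐ ω ∂μ, μ[fun ω' => exp (δ * |X k ω'| ^ Q)|ℱ (k - 1)] ω ≤ K

noncomputable def smallDevRate (δ K : ℝ) : ℝ := min (δ / 2) (δ ^ 2 / (32 * exp δ * K)) / 2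

noncomputable def largeDevRate (Q δ : ℝ) : ℝ := δ / 2 ^ Q / 2

noncomputable def devRate (Q δ K : ℝ) : ℝ :=
  smallDevRate δ K * largeDevRate Q δ / (smallDevRate δ K + largeDevRate Q δ + |log K|)

section Rates

variable {Q δ K : ℝ}

theorem smallDevRate_pos (hδ : 0 < δ) (hK : 0 < K) : 0 < smallDevRate δ K := by
  unfold smallDevRate; positivity

theorem largeDevRate_pos (hδ : 0 < δ) : 0 < largeDevRate Q δ := by
  unfold largeDevRate; positivity

theorem devRate_pos (hδ : 0 < δ) (hK : 0 < K) : 0 < devRate Q δ K := by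
  have := smallDevRate_pos hδ hK
  have := largeDevRate_pos (Q := Q) hδ
  unfold devRate; positivity

theorem devRate_mul_le_smallDevRate (hδ : 0 < δ) (hK : 0 < K) {y : ℝ}
    (hy : largeDevRate Q δ * y ≤ |log K|) : devRate Q δ K * y ≤ smallDevRate δ K := by
  have h₁ := smallDevRate_pos hδ hK
  have h₂ := largeDevRate_pos (Q := Q) hδ
  rw [devRate, div_mul_eq_mul_div, mul_assoc, mul_div_assoc]
  refine mul_le_of_le_one_right h₁.le ((div_le_one (by positivity)).2 ?_)
  linarith

theorem devRate_le_smallDevRate (hδ : 0 < δ) (hK : 0 < K) : devRate Q δ K ≤ smallDevRate δ K := by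
  have h₁ := smallDevRate_pos hδ hK
  have h₂ := largeDevRate_pos (Q := Q) hδ
  rw [devRate, mul_div_assoc]
  refine mul_le_of_le_one_right h₁.le ((div_le_one (by positivity)).2 ?_)
  linarith [abs_nonneg (log K)]

theorem devRate_le_largeDevRate (hδ : 0 < δ) (hK : 0 < K) : devRate Q δ K ≤ largeDevRate Q δ := by
  have h₁ := smallDevRate_pos hδ hK
  have h₂ := largeDevRate_pos (Q := Q) hδ
  rw [devRate, mul_div_right_comm]
  refine mul_le_of_le_one_left h₂.le ((div_le_one (by positivity)).2 ?_)
  linarith [abs_nonneg (log K)]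

end Rates

namespace MartingaleDiffExpMoment

variable {Ω : Type*} {m0 : MeasurableSpace Ω} {μ : Measure Ω} {ℱ : Filtration ℕ m0} {n : ℕ}
  {X : ℕ → Ω → ℝ} {Q δ K : ℝ}

theorem neg (h : MartingaleDiffExpMoment μ ℱ n X Q δ K) :
    MartingaleDiffExpMoment μ ℱ n (-X) Q δ K where
  stronglyMeasurable k hk := (h.stronglyMeasurable k hk).neg
  integrable k hk := (h.integrable k hk).neg
  condExp_eq_zero k hk := (condExp_neg (X k) _).trans <| by
    filter_upwards [h.condExp_eq_zero k hk] with ω hω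
    simp [hω]
  integrable_exp k hk := by simpa using h.integrable_exp k hk
  condExp_exp_le k hk := by simpa using h.condExp_exp_le k hk

variable [IsProbabilityMeasure μ]

theorem measure_lt_sum_le_exp_neg_sq (h : MartingaleDiffExpMoment μ ℱ n X Q δ K) (hQ : 1 ≤ Q)
    (hδ : 0 < δ) (hK : 0 ≤ K) {θ : ℝ} (hθ0 : 0 ≤ θ) (hθδ : θ ≤ δ / 2)
    (hθK : 32 * exp δ * K * θ ≤ δ ^ 2) {x : ℝ} (hx0 : 0 ≤ x) (hx1 : x ≤ 1) :
    μ {ω | n * x < ∑ k ∈ Icc 1 n, X k ω} ≤ ENNReal.ofReal (exp (-(n * (θ / 2) * x ^ 2))) := by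
  set A := 16 * exp δ / δ ^ 2 * K
  have hl0 : 0 ≤ θ * x := mul_nonneg hθ0 hx0
  have hlδ : θ * x ≤ δ / 2 := (mul_le_of_le_one_right hθ0 hx1).trans hθδ
  have hmgf : ∀ k ∈ Icc 1 n, Integrable (fun ω => exp (θ * x * X k ω)) μ ∧
      ∀ᵐ ω ∂μ, μ[fun ω' => exp (θ * x * X k ω')|ℱ (k - 1)] ω ≤ 1 + A * (θ * x) ^ 2 := by
    intro k hk
    have := ae_condExp_le_of_le_add_mul (ℱ.le (k - 1)) (by positivity)
      (continuous_exp.comp_aestronglyMeasurable ((h.integrable k hk).1.const_mul _))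
      (fun ω => (exp_pos _).le) (h.integrable k hk) (h.condExp_eq_zero k hk)
      (h.integrable_exp k hk) (h.condExp_exp_le k hk)
      (fun ω => exp_mul_le_one_add_mul_add_sq_mul_exp_rpow hQ hδ hl0 hlδ (X k ω))
    exact ⟨this.1, this.2.mono fun ω hω => hω.trans_eq (by ring)⟩
  refine (measure_lt_sum_le_of_condExp_exp_le hl0 (by positivity) h.stronglyMeasurable
    (fun k hk => (hmgf k hk).1) (fun k hk => (hmgf k hk).2) _).trans ?_
  gcongr ENNReal.ofReal ?_
  have hAθ : A * θ ≤ 1 / 2 := by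
    rw [show A * θ = 32 * exp δ * K * θ / δ ^ 2 / 2 by ring]
    gcongr
    exact (div_le_one (by positivity)).2 hθK
  calc exp (-(θ * x * (n * x))) * (1 + A * (θ * x) ^ 2) ^ n
      ≤ exp (-(θ * x * (n * x))) * exp (A * (θ * x) ^ 2) ^ n := by
        gcongr; linarith [add_one_le_exp (A * (θ * x) ^ 2)]
    _ = exp (n * (A * (θ * x) ^ 2 - θ * x * x)) := by rw [← exp_nat_mul, ← exp_add]; ring_nf
    _ ≤ exp (-(n * (θ / 2) * x ^ 2)) := by
        have key : A * (θ * x) ^ 2 - θ * x * x ≤ -(θ / 2 * x ^ 2) := by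
          nlinarith [mul_le_mul_of_nonneg_right hAθ (mul_nonneg hθ0 (sq_nonneg x))]
        gcongr
        nlinarith [mul_le_mul_of_nonneg_left key (Nat.cast_nonneg (α := ℝ) n)]

theorem measure_lt_sum_le_pow_mul_exp_neg_rpow (h : MartingaleDiffExpMoment μ ℱ n X Q δ K)
    (hQ : 1 ≤ Q) (hδ : 0 ≤ δ) (hK : 0 ≤ K) {x : ℝ} (hx : 0 ≤ x) :
    μ {ω | n * x < ∑ k ∈ Icc 1 n, X k ω} ≤
      ENNReal.ofReal (K ^ n * exp (-(n * (δ * (x / 2) ^ Q)))) := by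
  set a := x / 2
  have ha : 0 ≤ a := by positivity
  have hmgf : ∀ k ∈ Icc 1 n, Integrable (fun ω => exp (δ * a ^ (Q - 1) * X k ω)) μ ∧
      ∀ᵐ ω ∂μ, μ[fun ω' => exp (δ * a ^ (Q - 1) * X k ω')|ℱ (k - 1)] ω ≤ exp (δ * a ^ Q) * K := by
    intro k hk
    simpa using ae_condExp_le_of_le_add_mul (a := 0) (b := 0) (ℱ.le (k - 1)) (exp_pos _).le
      (continuous_exp.comp_aestronglyMeasurable ((h.integrable k hk).1.const_mul _))
      (fun ω => (exp_pos _).le) (h.integrable k hk) (h.condExp_eq_zero k hk)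
      (h.integrable_exp k hk) (h.condExp_exp_le k hk)
      (fun ω => by simpa using exp_mul_rpow_sub_one_mul_le hQ hδ ha (X k ω))
  refine (measure_lt_sum_le_of_condExp_exp_le (by positivity) (by positivity) h.stronglyMeasurable
    (fun k hk => (hmgf k hk).1) (fun k hk => (hmgf k hk).2) _).trans_eq ?_
  have hax : a ^ (Q - 1) * x = 2 * a ^ Q := by
    rw [show x = 2 * a by ring, mul_left_comm, ← rpow_add_one' ha (by linarith), sub_add_cancel]
  rw [mul_pow, ← exp_nat_mul, mul_left_comm, ← mul_assoc, ← exp_add, mul_comm]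
  congr 3
  linear_combination (-(n * δ : ℝ)) * hax

theorem measure_lt_sum_le_exp_neg_smallDevRate (h : MartingaleDiffExpMoment μ ℱ n X Q δ K)
    (hQ : 1 ≤ Q) (hδ : 0 < δ) (hK : 0 < K) {x : ℝ} (hx0 : 0 ≤ x) (hx1 : x ≤ 1) :
    μ {ω | n * x < ∑ k ∈ Icc 1 n, X k ω} ≤
      ENNReal.ofReal (exp (-(n * smallDevRate δ K * x ^ 2))) := by
  refine h.measure_lt_sum_le_exp_neg_sq hQ hδ hK.le (by positivity) (min_le_left _ _) ?_ hx0 hx1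
  rw [← le_div_iff₀' (by positivity)]
  exact min_le_right _ _

theorem measure_lt_sum_le_of_le_one (h : MartingaleDiffExpMoment μ ℱ n X Q δ K) (hQ : 1 ≤ Q)
    (hδ : 0 < δ) (hK : 0 < K) {x : ℝ} (hx0 : 0 ≤ x) (hx1 : x ≤ 1) :
    μ {ω | n * x < ∑ k ∈ Icc 1 n, X k ω} ≤ ENNReal.ofReal (exp (-(n * devRate Q δ K * x ^ 2))) := by
  refine (h.measure_lt_sum_le_exp_neg_smallDevRate hQ hδ hK hx0 hx1).trans ?_
  gcongr
  exact devRate_le_smallDevRate hδ hK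

theorem measure_lt_sum_le_of_one_lt (h : MartingaleDiffExpMoment μ ℱ n X Q δ K) (hQ : 1 ≤ Q)
    (hδ : 0 < δ) (hK : 0 < K) {x : ℝ} (hx : 1 < x) :
    μ {ω | n * x < ∑ k ∈ Icc 1 n, X k ω} ≤ ENNReal.ofReal (exp (-(n * devRate Q δ K * x ^ Q))) := by
  have hn : (0 : ℝ) ≤ n := n.cast_nonneg
  rcases le_or_gt (log K) (largeDevRate Q δ * x ^ Q) with hlog | hlog
  · refine (h.measure_lt_sum_le_pow_mul_exp_neg_rpow hQ hδ.le hK.le (by positivity)).trans ?_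
    gcongr ENNReal.ofReal ?_
    have hhalf : δ * (x / 2) ^ Q = 2 * (largeDevRate Q δ * x ^ Q) := by
      rw [div_rpow (by positivity) zero_le_two, largeDevRate]; ring
    have hKn : K ^ n = exp (n * log K) := by rw [exp_nat_mul, exp_log hK]
    rw [hKn, ← exp_add, hhalf, exp_le_exp]
    have := devRate_le_largeDevRate (Q := Q) hδ hK
    nlinarith [mul_le_mul_of_nonneg_right this (rpow_nonneg (zero_le_one.trans hx.le) Q)]
  · calc μ {ω | n * x < ∑ k ∈ Icc 1 n, X k ω} ≤ μ {ω | n * 1 < ∑ k ∈ Icc 1 n, X k ω} :=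
          measure_mono fun ω (hω : n * x < _) => (mul_le_mul_of_nonneg_left hx.le hn).trans_lt hω
      _ ≤ ENNReal.ofReal (exp (-(n * smallDevRate δ K * 1 ^ 2))) :=
          h.measure_lt_sum_le_exp_neg_smallDevRate hQ hδ hK zero_le_one le_rfl
      _ ≤ ENNReal.ofReal (exp (-(n * devRate Q δ K * x ^ Q))) := by
          have := devRate_mul_le_smallDevRate hδ hK (hlog.le.trans (le_abs_self _))
          gcongr ENNReal.ofReal (exp ?_)
          nlinarith

end MartingaleDiffExpMoment

/-- Theorem 1.1 (first part): exponential large deviation inequality for martingale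
differences under a conditional exponential moment condition. -/
theorem martingale_exponential_inequality
    (Q δ K : ℝ) (hQ : 1 ≤ Q) (hδ : 0 < δ) (hK : 0 < K) :
    ∃ c : ℝ, 0 < c ∧
      ∀ {Ω : Type*} {m0 : MeasurableSpace Ω} (μ : Measure Ω), IsProbabilityMeasure μ →
      ∀ (ℱ : Filtration ℕ m0) (n : ℕ) (X : ℕ → Ω → ℝ), 1 ≤ n →
        (∀ k ∈ Finset.Icc 1 n, StronglyMeasurable[ℱ k] (X k)) →
        (∀ k ∈ Finset.Icc 1 n, Integrable (X k) μ) →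
        (∀ k ∈ Finset.Icc 1 n, μ[X k|ℱ (k - 1)] =ᵐ[μ] 0) →
        (∀ k ∈ Finset.Icc 1 n,
          Integrable (fun ω => Real.exp (δ * |X k ω| ^ Q)) μ) →
        (∀ k ∈ Finset.Icc 1 n,
          ∀ᵐ ω ∂μ, (μ[fun ω' => Real.exp (δ * |X k ω'| ^ Q)|ℱ (k - 1)]) ω ≤ K) →
        ∀ x : ℝ, 0 < x →
          ((x ≤ 1 →
              μ {ω | (∑ k ∈ Finset.Icc 1 n, X k ω) / n > x} ≤
                ENNReal.ofReal (Real.exp (-(n * c * x ^ 2))) ∧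
              μ {ω | -((∑ k ∈ Finset.Icc 1 n, X k ω) / n) > x} ≤
                ENNReal.ofReal (Real.exp (-(n * c * x ^ 2)))) ∧
            (1 < x →
              μ {ω | (∑ k ∈ Finset.Icc 1 n, X k ω) / n > x} ≤
                ENNReal.ofReal (Real.exp (-(n * c * x ^ Q))) ∧
              μ {ω | -((∑ k ∈ Finset.Icc 1 n, X k ω) / n) > x} ≤
                ENNReal.ofReal (Real.exp (-(n * c * x ^ Q))))) := by
  refine ⟨devRate Q δ K, devRate_pos hδ hK, ?_⟩
  intro Ω m0 μ _ ℱ n X hn hmeas hint hzero hexp_int hexp_le x hx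
  have h : MartingaleDiffExpMoment μ ℱ n X Q δ K := ⟨hmeas, hint, hzero, hexp_int, hexp_le⟩
  have hn' : (0 : ℝ) < n := by exact_mod_cast hn
  have hupper : {ω | (∑ k ∈ Icc 1 n, X k ω) / n > x} = {ω | n * x < ∑ k ∈ Icc 1 n, X k ω} := by
    ext ω; simp only [Set.mem_ofPred_eq, gt_iff_lt, lt_div_iff₀ hn', mul_comm]
  have hlower : {ω | -((∑ k ∈ Icc 1 n, X k ω) / n) > x} =
      {ω | n * x < ∑ k ∈ Icc 1 n, (-X) k ω} := by
    ext ω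
    simp only [Set.mem_ofPred_eq, gt_iff_lt, Pi.neg_apply, sum_neg_distrib, ← neg_div,
      lt_div_iff₀ hn', mul_comm]
  rw [hupper, hlower]
  exact ⟨fun hx1 => ⟨h.measure_lt_sum_le_of_le_one hQ hδ hK hx.le hx1,
      h.neg.measure_lt_sum_le_of_le_one hQ hδ hK hx.le hx1⟩,
    fun hx1 => ⟨h.measure_lt_sum_le_of_one_lt hQ hδ hK hx1,
      h.neg.measure_lt_sum_le_of_one_lt hQ hδ hK hx1⟩⟩
end

section
/- Let (X_k)_{1≤k≤n} be independent and identically distributed real random variables with S_n = X_1 + ⋯ + X_n. If for some n ≥ 1, Q ≥ 1, c > 0 and x_1 > 0 one has P[S_n/n > x] ≤ exp(−n c x^Q) and P[−S_n/n > x] ≤ exp(−n c x^Q) for all x ≥ x_1, then for every δ ∈ (0, c) there exists a constant K > 0, depending only on δ, Q, c and x_1, such that E[exp(δ|X_1|^Q)] ≤ K. -/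
/-!
If every `X i` exceeds `t` then so does the average `S n / n`; by independence this gives
`P[X 1 > t] ^ n ≤ P[S n / n > t] ≤ exp (-n c t ^ Q)`, so each tail of `X 1` is at most
`exp (-c t ^ Q)`, uniformly in `n`. Slicing `|X 1|` into unit intervals above a level `a`, the
slice `(a + k, a + k + 1]` contributes at most `exp (δ (a + k + 1) ^ Q - c (a + k) ^ Q)`, which for
`a` large (so that `(1 + 1 / t) ^ Q ≤ (c + δ) / (2 δ)` for `t ≥ a`) is at most `exp (-(c - δ) k / 2)`;
summing the geometric series bounds the exponential moment.
-/

open MeasureTheory ProbabilityTheory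
open scoped ENNReal

namespace ProbabilityTheory

variable {Ω ι β : Type*} {m0 : MeasurableSpace Ω} {μ : Measure Ω}

lemma iIndepFun.measure_iInter_preimage_eq_pow [MeasurableSpace β] [Fintype ι]
    {X : ι → Ω → β} {Y : Ω → β} (hind : iIndepFun X μ) (hid : ∀ i, IdentDistrib (X i) Y μ μ)
    {s : Set β} (hs : MeasurableSet s) :
    μ (⋂ i, X i ⁻¹' s) = μ (Y ⁻¹' s) ^ Fintype.card ι := by
  rw [hind.meas_iInter fun i => ⟨s, hs, rfl⟩, ← Finset.card_univ, ← Finset.prod_const]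
  exact Finset.prod_congr rfl fun i _ => (hid i).measure_mem_eq hs

lemma measure_lt_pow_card_le_measure_average_gt {s : Finset ι} (hs : s.Nonempty)
    {X : ι → Ω → ℝ} {Y : Ω → ℝ} (hind : iIndepFun (fun i : s => X i) μ)
    (hid : ∀ i ∈ s, IdentDistrib (X i) Y μ μ) (t : ℝ) :
    μ {ω | t < Y ω} ^ s.card ≤ μ {ω | (∑ i ∈ s, X i ω) / s.card > t} := by
  change μ (Y ⁻¹' Set.Ioi t) ^ s.card ≤ _
  have h_inter :=
    hind.measure_iInter_preimage_eq_pow (fun i => hid i i.2) (measurableSet_Ioi (a := t))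
  rw [Fintype.card_coe] at h_inter
  rw [← h_inter]
  refine measure_mono fun ω hω => ?_
  simp only [Set.mem_iInter, Set.mem_preimage, Set.mem_Ioi] at hω
  rw [Set.mem_ofPred_eq, gt_iff_lt, lt_div_iff₀ (by simpa using hs.card_pos), mul_comm,
    ← nsmul_eq_mul, ← Finset.sum_const]
  exact Finset.sum_lt_sum_of_nonempty hs fun i hi => hω ⟨i, hi⟩

lemma measure_lt_neg_pow_card_le_measure_neg_average_gt {s : Finset ι} (hs : s.Nonempty)
    {X : ι → Ω → ℝ} {Y : Ω → ℝ} (hind : iIndepFun (fun i : s => X i) μ)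
    (hid : ∀ i ∈ s, IdentDistrib (X i) Y μ μ) (t : ℝ) :
    μ {ω | Y ω < -t} ^ s.card ≤ μ {ω | -((∑ i ∈ s, X i ω) / s.card) > t} := by
  have := measure_lt_pow_card_le_measure_average_gt hs (X := fun i => -X i) (Y := -Y)
    (hind.comp (fun _ => Neg.neg) fun _ => measurable_neg)
    (fun i hi => (hid i hi).comp measurable_neg) t
  simpa [lt_neg, neg_div] using this

lemma measure_lt_abs_le_two_mul_of_average_tails {s : Finset ι} (hs : s.Nonempty)
    {X : ι → Ω → ℝ} {Y : Ω → ℝ} (hind : iIndepFun (fun i : s => X i) μ)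
    (hid : ∀ i ∈ s, IdentDistrib (X i) Y μ μ) {t : ℝ} {r : ℝ≥0∞}
    (hup : μ {ω | (∑ i ∈ s, X i ω) / s.card > t} ≤ r ^ s.card)
    (hlow : μ {ω | -((∑ i ∈ s, X i ω) / s.card) > t} ≤ r ^ s.card) :
    μ {ω | t < |Y ω|} ≤ 2 * r := by
  have root {m : ℝ≥0∞} (h : m ^ s.card ≤ r ^ s.card) : m ≤ r :=
    (ENNReal.pow_le_pow_left_iff hs.card_ne_zero).1 h
  calc μ {ω | t < |Y ω|} = μ ({ω | t < Y ω} ∪ {ω | Y ω < -t}) := by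
        congr 1; ext ω; simp [lt_abs, lt_neg]
    _ ≤ μ {ω | t < Y ω} + μ {ω | Y ω < -t} := measure_union_le _ _
    _ ≤ r + r := add_le_add
        (root ((measure_lt_pow_card_le_measure_average_gt hs hind hid t).trans hup))
        (root ((measure_lt_neg_pow_card_le_measure_neg_average_gt hs hind hid t).trans hlow))
    _ = 2 * r := (two_mul r).symm

end ProbabilityTheory

namespace Real

lemma rpow_add_one_le_mul_rpow {Q t r : ℝ} (hQ : 0 ≤ Q) (ht : 0 < t) (hr : 0 < r)
    (h : Q ≤ t * log r) : (t + 1) ^ Q ≤ r * t ^ Q := by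
  have h_exp : t⁻¹ * Q ≤ log r := by
    rw [inv_mul_le_iff₀ ht]; exact h
  calc (t + 1) ^ Q = (t⁻¹ + 1) ^ Q * t ^ Q := by
        rw [← mul_rpow (by positivity) ht.le, add_mul, inv_mul_cancel₀ ht.ne', one_mul, add_comm]
    _ ≤ exp t⁻¹ ^ Q * t ^ Q := by gcongr; exact add_one_le_exp _
    _ = exp (t⁻¹ * Q) * t ^ Q := by rw [← exp_mul]
    _ ≤ r * t ^ Q := by
        gcongr
        exact (exp_le_exp.2 h_exp).trans_eq (exp_log hr)

end Real

lemma le_add_tsum_indicator_of_monotoneOn {f : ℝ → ℝ≥0∞} (hf : MonotoneOn f (Set.Ici 0))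
    {a r : ℝ} (ha : 0 ≤ a) (hr : 0 ≤ r) :
    f r ≤ f a + ∑' k : ℕ, {x | a + k < x}.indicator (fun _ => f (a + k + 1)) r := by
  rcases le_or_gt r a with hra | hra
  · exact (hf hr ha hra).trans le_self_add
  have hceil : 0 < ⌈r - a⌉₊ := Nat.ceil_pos.2 (sub_pos.2 hra)
  set k := ⌈r - a⌉₊ - 1
  have hk_lt : a + k < r := by
    have := Nat.lt_ceil.1 (Nat.sub_one_lt hceil.ne')
    linarith
  have hk_le : r ≤ a + k + 1 := by
    have := Nat.ceil_le.1 (show ⌈r - a⌉₊ ≤ k + 1 by omega)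
    push_cast at this
    linarith
  calc f r ≤ f (a + k + 1) := hf hr (by simp only [Set.mem_Ici]; positivity) hk_le
    _ = {x | a + k < x}.indicator (fun _ => f (a + k + 1)) r :=
        (Set.indicator_of_mem (s := {x | a + k < x}) hk_lt (fun _ => f (a + k + 1))).symm
    _ ≤ _ := (ENNReal.le_tsum k).trans le_add_self

lemma lintegral_comp_abs_le_add_tsum {Ω : Type*} {_ : MeasurableSpace Ω} (μ : Measure Ω)
    [IsProbabilityMeasure μ] {f : ℝ → ℝ≥0∞} (hf : MonotoneOn f (Set.Ici 0)) {Y : Ω → ℝ}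
    (hY : Measurable Y) {a : ℝ} (ha : 0 ≤ a) :
    ∫⁻ ω, f |Y ω| ∂μ ≤ f a + ∑' k : ℕ, f (a + k + 1) * μ {ω | a + k < |Y ω|} := by
  have h_meas (k : ℕ) : MeasurableSet {ω | a + k < |Y ω|} :=
    measurableSet_lt measurable_const hY.abs
  calc ∫⁻ ω, f |Y ω| ∂μ
      ≤ ∫⁻ ω, (f a + ∑' k : ℕ, {ω | a + k < |Y ω|}.indicator (fun _ => f (a + k + 1)) ω) ∂μ :=
        lintegral_mono fun ω => le_add_tsum_indicator_of_monotoneOn hf ha (abs_nonneg _)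
    _ = f a + ∑' k : ℕ, f (a + k + 1) * μ {ω | a + k < |Y ω|} := by
        rw [lintegral_add_left measurable_const, lintegral_const, measure_univ, mul_one,
          lintegral_tsum fun k => (measurable_const.indicator (h_meas k)).aemeasurable]
        simp only [lintegral_indicator (h_meas _), setLIntegral_const]

lemma mul_rpow_add_one_sub_mul_rpow_le {Q δ c t : ℝ} (hQ : 1 ≤ Q) (hδ : 0 < δ) (hδc : δ < c)
    (ht1 : 1 ≤ t) (ht : Q / Real.log ((c + δ) / (2 * δ)) ≤ t) :
    δ * (t + 1) ^ Q - c * t ^ Q ≤ -((c - δ) / 2 * t) := by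
  have h_ratio : 1 < (c + δ) / (2 * δ) := by rw [one_lt_div (by positivity)]; linarith
  have h_log := Real.log_pos h_ratio
  have h_shift : δ * (t + 1) ^ Q ≤ (c + δ) / 2 * t ^ Q := by
    have := Real.rpow_add_one_le_mul_rpow (by linarith) (by linarith) (by linarith)
      ((div_le_iff₀ h_log).1 ht)
    calc δ * (t + 1) ^ Q ≤ δ * ((c + δ) / (2 * δ) * t ^ Q) := by gcongr
      _ = (c + δ) / 2 * t ^ Q := by field_simp
  have h_pow : (c - δ) / 2 * t ≤ (c - δ) / 2 * t ^ Q :=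
    mul_le_mul_of_nonneg_left (Real.self_le_rpow_of_one_le ht1 hQ) (by linarith)
  linarith

theorem lintegral_exp_mul_abs_rpow_le_of_tail_le {Q c δ C x₁ a : ℝ} (hQ : 1 ≤ Q) (hδ : 0 < δ)
    (hδc : δ < c) (hC : 0 ≤ C) (ha1 : 1 ≤ a) (hax₁ : x₁ ≤ a)
    (haQ : Q / Real.log ((c + δ) / (2 * δ)) ≤ a) {Ω : Type*} {_ : MeasurableSpace Ω}
    (μ : Measure Ω) [IsProbabilityMeasure μ] {Y : Ω → ℝ} (hY : Measurable Y)
    (htail : ∀ t, x₁ ≤ t → μ {ω | t < |Y ω|} ≤ ENNReal.ofReal (C * Real.exp (-(c * t ^ Q)))) :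
    ∫⁻ ω, ENNReal.ofReal (Real.exp (δ * |Y ω| ^ Q)) ∂μ ≤
      ENNReal.ofReal (Real.exp (δ * a ^ Q) + C / (1 - Real.exp (-((c - δ) / 2)))) := by
  set q := Real.exp (-((c - δ) / 2))
  have hq0 : 0 ≤ q := Real.exp_nonneg _
  have hq1 : q < 1 := Real.exp_lt_one_iff.2 (by linarith)
  have hf : MonotoneOn (fun x => ENNReal.ofReal (Real.exp (δ * x ^ Q))) (Set.Ici 0) :=
    fun x hx y _ hxy => ENNReal.ofReal_le_ofReal <| Real.exp_le_exp.2 <|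
      mul_le_mul_of_nonneg_left (Real.rpow_le_rpow hx hxy (by linarith)) hδ.le
  have hterm (k : ℕ) : ENNReal.ofReal (Real.exp (δ * (a + k + 1) ^ Q)) *
      μ {ω | a + k < |Y ω|} ≤ ENNReal.ofReal (C * q ^ k) := by
    have hk : (0 : ℝ) ≤ k := k.cast_nonneg
    have h_exp : δ * (a + k + 1) ^ Q - c * (a + k) ^ Q ≤ k * -((c - δ) / 2) := by
      have h_slice :=
        mul_rpow_add_one_sub_mul_rpow_le hQ hδ hδc (t := a + k) (by linarith) (by linarith)
      have h_a : 0 ≤ (c - δ) * a := mul_nonneg (by linarith) (by linarith)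
      linarith
    calc ENNReal.ofReal (Real.exp (δ * (a + k + 1) ^ Q)) * μ {ω | a + k < |Y ω|}
        ≤ ENNReal.ofReal (Real.exp (δ * (a + k + 1) ^ Q)) *
            ENNReal.ofReal (C * Real.exp (-(c * (a + k) ^ Q))) := by
          gcongr; exact htail _ (by linarith)
      _ = ENNReal.ofReal (C * Real.exp (δ * (a + k + 1) ^ Q - c * (a + k) ^ Q)) := by
          rw [← ENNReal.ofReal_mul (Real.exp_nonneg _), Real.exp_sub, Real.exp_neg]
          congr 1
          ring
      _ ≤ ENNReal.ofReal (C * q ^ k) := by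
          rw [← Real.exp_nat_mul]
          gcongr
  have hsum := (summable_geometric_of_lt_one hq0 hq1).mul_left C
  calc ∫⁻ ω, ENNReal.ofReal (Real.exp (δ * |Y ω| ^ Q)) ∂μ
      ≤ ENNReal.ofReal (Real.exp (δ * a ^ Q)) + ∑' k : ℕ,
          ENNReal.ofReal (Real.exp (δ * (a + k + 1) ^ Q)) * μ {ω | a + k < |Y ω|} :=
        lintegral_comp_abs_le_add_tsum μ hf hY (by linarith)
    _ ≤ ENNReal.ofReal (Real.exp (δ * a ^ Q)) + ∑' k : ℕ, ENNReal.ofReal (C * q ^ k) := by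
        gcongr with k; exact hterm k
    _ = ENNReal.ofReal (Real.exp (δ * a ^ Q) + C / (1 - q)) := by
        rw [← ENNReal.ofReal_tsum_of_nonneg (fun k => by positivity) hsum, tsum_mul_left,
          tsum_geometric_of_lt_one hq0 hq1, ← div_eq_mul_inv,
          ← ENNReal.ofReal_add (by positivity) (div_nonneg hC (by linarith))]

theorem iid_exponential_moment_of_deviation_bound_general
    (Q c x₁ δ : ℝ) (hQ : 1 ≤ Q) (hδ0 : 0 < δ) (hδc : δ < c) :
    ∃ K : ℝ, 0 < K ∧
      ∀ {Ω : Type*} {m0 : MeasurableSpace Ω} (μ : Measure Ω), IsProbabilityMeasure μ →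
      ∀ (n : ℕ) (X : ℕ → Ω → ℝ), 1 ≤ n →
        (∀ i, Measurable (X i)) →
        iIndepFun (m := fun _ : {i : ℕ // i ∈ Finset.Icc 1 n} => (inferInstance : MeasurableSpace ℝ))
          (fun i : {i : ℕ // i ∈ Finset.Icc 1 n} => X i) μ →
        (∀ i ∈ Finset.Icc 1 n, IdentDistrib (X i) (X 1) μ μ) →
        (∀ x : ℝ, x₁ ≤ x →
          μ {ω | (∑ k ∈ Finset.Icc 1 n, X k ω) / n > x} ≤
            ENNReal.ofReal (Real.exp (-(n * c * x ^ Q))) ∧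
          μ {ω | -((∑ k ∈ Finset.Icc 1 n, X k ω) / n) > x} ≤
            ENNReal.ofReal (Real.exp (-(n * c * x ^ Q)))) →
        ∫⁻ ω, ENNReal.ofReal (Real.exp (δ * |X 1 ω| ^ Q)) ∂μ ≤ ENNReal.ofReal K := by
  set a := max (max x₁ 1) (Q / Real.log ((c + δ) / (2 * δ)))
  have hq : 0 ≤ 1 - Real.exp (-((c - δ) / 2)) :=
    sub_nonneg.2 (Real.exp_le_one_iff.2 (by linarith))
  refine ⟨Real.exp (δ * a ^ Q) + 2 / (1 - Real.exp (-((c - δ) / 2))),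
    add_pos_of_pos_of_nonneg (Real.exp_pos _) (div_nonneg zero_le_two hq), ?_⟩
  intro Ω _ μ _ n X hn hX hind hid hdev
  have hs : (Finset.Icc 1 n).Nonempty := Finset.nonempty_Icc.2 hn
  have hcard : (Finset.Icc 1 n).card = n := by simp
  refine lintegral_exp_mul_abs_rpow_le_of_tail_le hQ hδ0 hδc zero_le_two
    ((le_max_right _ _).trans (le_max_left _ _)) ((le_max_left _ _).trans (le_max_left _ _))
    (le_max_right _ _) μ (hX 1) fun t ht => ?_
  have hpow : ENNReal.ofReal (Real.exp (-(n * c * t ^ Q))) =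
      ENNReal.ofReal (Real.exp (-(c * t ^ Q))) ^ n := by
    rw [← ENNReal.ofReal_pow (Real.exp_nonneg _), ← Real.exp_nat_mul]
    ring_nf
  rw [ENNReal.ofReal_mul zero_le_two, ENNReal.ofReal_ofNat]
  refine measure_lt_abs_le_two_mul_of_average_tails hs hind hid ?_ ?_
    <;> rw [hcard, ← hpow]
  exacts [(hdev t ht).1, (hdev t ht).2]

/-- Theorem 1.1 (converse part): if i.i.d. partial sums satisfy a two-sided exponential
deviation bound of order `x ^ Q` for `x ≥ x₁`, then `X 1` has a finite exponential
moment of order `Q`, with a bound depending only on `δ, Q, c, x₁`. -/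
theorem iid_exponential_moment_of_deviation_bound
    (Q c x₁ δ : ℝ) (hQ : 1 ≤ Q) (hc : 0 < c) (hx₁ : 0 < x₁) (hδ0 : 0 < δ) (hδc : δ < c) :
    ∃ K : ℝ, 0 < K ∧
      ∀ {Ω : Type*} {m0 : MeasurableSpace Ω} (μ : Measure Ω), IsProbabilityMeasure μ →
      ∀ (n : ℕ) (X : ℕ → Ω → ℝ), 1 ≤ n →
        (∀ i, Measurable (X i)) →
        iIndepFun (m := fun _ : {i : ℕ // i ∈ Finset.Icc 1 n} => (inferInstance : MeasurableSpace ℝ))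
          (fun i : {i : ℕ // i ∈ Finset.Icc 1 n} => X i) μ →
        (∀ i ∈ Finset.Icc 1 n, IdentDistrib (X i) (X 1) μ μ) →
        (∀ x : ℝ, x₁ ≤ x →
          μ {ω | (∑ k ∈ Finset.Icc 1 n, X k ω) / n > x} ≤
            ENNReal.ofReal (Real.exp (-(n * c * x ^ Q))) ∧
          μ {ω | -((∑ k ∈ Finset.Icc 1 n, X k ω) / n) > x} ≤
            ENNReal.ofReal (Real.exp (-(n * c * x ^ Q)))) →
        ∫⁻ ω, ENNReal.ofReal (Real.exp (δ * |X 1 ω| ^ Q)) ∂μ ≤ ENNReal.ofReal K :=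
  iid_exponential_moment_of_deviation_bound_general Q c x₁ δ hQ hδ0 hδc
end

section
/- Let (X_k)_{k≥1} be independent and identically distributed real random variables with E[X_k] = 0, and S_n = X_1 + ⋯ + X_n. Then the following are equivalent: (i) there exists a constant c > 0 such that for all n ≥ 1 and all x > 0, P[S_n/n > x] ≤ exp(−n c x²) and P[−S_n/n > x] ≤ exp(−n c x²); (ii) there exists δ > 0 such that E[exp(δ X_1²)] < ∞. Moreover, if (i) holds for some single n ≥ 1 and all x > 0 with some constant c = c_1, then it holds for all n ≥ 1 and x > 0 with some constant c_2 depending only on c_1. -/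
/-!
A centered `X` with `E exp (δ X²) = M < ∞` has a sub-Gaussian mgf,
`E exp (t X) ≤ exp ((1 + 4 log M) t² / (4 δ))`: for `t² ≤ δ` expand `exp s ≤ s + exp s²` and
apply Jensen, for `t² > δ` complete the square. Independence multiplies mgfs, so the Chernoff
bound gives Gaussian tails for `S_n / n` with a constant uniform in `n`. Conversely, Gaussian
tails of any `Y` give `E exp (c Y² / 2) ≤ 3` by the layer-cake formula.

For the single-`n` statement this converse is applied to `Y = S_n / n`, which therefore has a
sub-Gaussian mgf with variance proxy `(1 + 4 log 3) / (n c₁)`. Since `mgf S_n = (mgf X₁)ⁿ`,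
taking `n`-th roots makes `(1 + 4 log 3) / c₁` a variance proxy for `X₁`, whatever `n` was.
-/

open MeasureTheory ProbabilityTheory Real
open scoped NNReal

lemma Real.exp_le_add_exp_sq (t : ℝ) : exp t ≤ t + exp (t ^ 2) := by
  have h_sq : 1 + t ^ 2 ≤ exp (t ^ 2) := by linarith [add_one_le_exp (t ^ 2)]
  rcases lt_or_ge |t| 1 with ht | ht
  · have := abs_le.1 (abs_exp_sub_one_sub_id_le ht.le)
    linarith
  rcases le_abs'.1 ht with ht | ht
  · nlinarith [exp_le_one_iff.2 (by linarith : t ≤ 0)]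
  · linarith [exp_le_exp.2 (by nlinarith : t ≤ t ^ 2)]

lemma Real.exp_mul_le_exp_sq_div_mul_exp_mul_sq {δ : ℝ} (hδ : 0 < δ) (t y : ℝ) :
    exp (t * y) ≤ exp (t ^ 2 / (4 * δ)) * exp (δ * y ^ 2) := by
  have hsq : t ^ 2 / (4 * δ) + δ * y ^ 2 - t * y = (t - 2 * δ * y) ^ 2 / (4 * δ) := by
    field_simp
    ring
  have hsq_nonneg : 0 ≤ (t - 2 * δ * y) ^ 2 / (4 * δ) := by positivity
  rw [← exp_add]
  exact exp_le_exp.2 (by linarith)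

section ExpSquareMoment

variable {Ω : Type*} {m0 : MeasurableSpace Ω} {μ : Measure Ω} {Y : Ω → ℝ} {δ : ℝ}

lemma integral_rpow_le_rpow_integral [IsProbabilityMeasure μ] {g : Ω → ℝ}
    (hg : Integrable g μ) (hg0 : ∀ ω, 0 ≤ g ω) {p : ℝ} (hp0 : 0 ≤ p) (hp1 : p ≤ 1) :
    ∫ ω, g ω ^ p ∂μ ≤ (∫ ω, g ω ∂μ) ^ p := by
  have hgp : Integrable (fun ω ↦ g ω ^ p) μ := by
    refine (hg.add (integrable_const 1)).mono' (hg.aemeasurable.pow_const p).aestronglyMeasurable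
      (ae_of_all _ fun ω ↦ ?_)
    rw [norm_of_nonneg (rpow_nonneg (hg0 ω) p), Pi.add_apply]
    rcases le_total (g ω) 1 with h | h
    · linarith [rpow_le_one (hg0 ω) h hp0, hg0 ω]
    · have := rpow_le_rpow_of_exponent_le h hp1
      rw [rpow_one] at this
      linarith
  exact (concaveOn_rpow hp0 hp1).le_map_integral (continuous_rpow_const hp0).continuousOn
    isClosed_Ici (ae_of_all _ hg0) hg hgp

lemma integrable_exp_mul_of_integrable_exp_mul_sq (hY : AEStronglyMeasurable Y μ) (hδ : 0 < δ)
    (hI : Integrable (fun ω ↦ exp (δ * Y ω ^ 2)) μ) (t : ℝ) :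
    Integrable (fun ω ↦ exp (t * Y ω)) μ :=
  (hI.const_mul _).mono' (hY.aemeasurable.const_mul t).exp.aestronglyMeasurable
    (ae_of_all _ fun ω ↦ by
      rw [norm_of_nonneg (exp_pos _).le]
      exact exp_mul_le_exp_sq_div_mul_exp_mul_sq hδ t (Y ω))

lemma mgf_le_exp_mul_integral_exp_mul_sq (hY : AEStronglyMeasurable Y μ) (hδ : 0 < δ)
    (hI : Integrable (fun ω ↦ exp (δ * Y ω ^ 2)) μ) (t : ℝ) :
    mgf Y μ t ≤ exp (t ^ 2 / (4 * δ)) * ∫ ω, exp (δ * Y ω ^ 2) ∂μ :=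
  (integral_mono (integrable_exp_mul_of_integrable_exp_mul_sq hY hδ hI t) (hI.const_mul _)
    fun ω ↦ exp_mul_le_exp_sq_div_mul_exp_mul_sq hδ t (Y ω)).trans_eq (integral_const_mul _ _)

/-- For small `t`, centering kills the linear term of `exp s ≤ s + exp (s ^ 2)`, and Jensen's
inequality for the concave map `x ↦ x ^ (t ^ 2 / δ)` does the rest. -/
lemma mgf_le_rpow_of_sq_le [IsProbabilityMeasure μ] (hint : Integrable Y μ) (h0 : μ[Y] = 0)
    (hδ : 0 < δ) (hI : Integrable (fun ω ↦ exp (δ * Y ω ^ 2)) μ) {t : ℝ} (ht : t ^ 2 ≤ δ) :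
    mgf Y μ t ≤ (∫ ω, exp (δ * Y ω ^ 2) ∂μ) ^ (t ^ 2 / δ) := by
  have hI_t : Integrable (fun ω ↦ exp (t ^ 2 * Y ω ^ 2)) μ :=
    hI.mono' (hint.aemeasurable.pow_const 2 |>.const_mul _).exp.aestronglyMeasurable
      (ae_of_all _ fun ω ↦ by
        rw [norm_of_nonneg (exp_pos _).le]
        exact exp_le_exp.2 (by gcongr))
  calc mgf Y μ t ≤ ∫ ω, (t * Y ω + exp (t ^ 2 * Y ω ^ 2)) ∂μ :=
        integral_mono (integrable_exp_mul_of_integrable_exp_mul_sq hint.1 hδ hI t)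
          ((hint.const_mul t).add hI_t)
          fun ω ↦ by simpa only [mul_pow] using exp_le_add_exp_sq (t * Y ω)
    _ = ∫ ω, exp (δ * Y ω ^ 2) ^ (t ^ 2 / δ) ∂μ := by
        rw [integral_add (hint.const_mul t) hI_t, integral_const_mul, h0, mul_zero, zero_add]
        congr with ω
        rw [← exp_mul]
        field_simp
    _ ≤ _ := integral_rpow_le_rpow_integral hI (fun _ ↦ (exp_pos _).le) (by positivity)
        ((div_le_one hδ).2 ht)

lemma one_le_integral_exp_mul_sq [IsProbabilityMeasure μ] (hδ : 0 ≤ δ)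
    (hI : Integrable (fun ω ↦ exp (δ * Y ω ^ 2)) μ) : 1 ≤ ∫ ω, exp (δ * Y ω ^ 2) ∂μ := by
  simpa using integral_mono (integrable_const (1 : ℝ)) hI fun ω ↦ one_le_exp (by positivity)

theorem hasSubgaussianMGF_of_integral_exp_mul_sq_le [IsProbabilityMeasure μ]
    (hint : Integrable Y μ) (h0 : μ[Y] = 0) (hδ : 0 < δ)
    (hI : Integrable (fun ω ↦ exp (δ * Y ω ^ 2)) μ) {M : ℝ}
    (hM : ∫ ω, exp (δ * Y ω ^ 2) ∂μ ≤ M) {c : ℝ≥0} (hc : (1 + 4 * log M) / (2 * δ) ≤ c) :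
    HasSubgaussianMGF Y c μ := by
  refine ⟨integrable_exp_mul_of_integrable_exp_mul_sq hint.1 hδ hI, fun t ↦ ?_⟩
  have hM_one : 1 ≤ M := (one_le_integral_exp_mul_sq hδ.le hI).trans hM
  have hlogM : 0 ≤ log M := log_nonneg hM_one
  have hexponent : t ^ 2 / (4 * δ) + log M * (t ^ 2 / δ) ≤ c * t ^ 2 / 2 := by
    calc t ^ 2 / (4 * δ) + log M * (t ^ 2 / δ) = (1 + 4 * log M) / (2 * δ) * t ^ 2 / 2 := by
          field_simp
          ring
      _ ≤ c * t ^ 2 / 2 := by gcongr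
  rcases le_or_gt (t ^ 2) δ with ht | ht
  · calc mgf Y μ t ≤ (∫ ω, exp (δ * Y ω ^ 2) ∂μ) ^ (t ^ 2 / δ) :=
          mgf_le_rpow_of_sq_le hint h0 hδ hI ht
      _ ≤ M ^ (t ^ 2 / δ) := by gcongr
      _ = exp (log M * (t ^ 2 / δ)) := rpow_def_of_pos (by linarith) _
      _ ≤ exp (c * t ^ 2 / 2) := by
          have : 0 ≤ t ^ 2 / (4 * δ) := by positivity
          exact exp_le_exp.2 (by linarith)
  · have ht' : 1 ≤ t ^ 2 / δ := (one_le_div hδ).2 ht.le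
    calc mgf Y μ t ≤ exp (t ^ 2 / (4 * δ)) * ∫ ω, exp (δ * Y ω ^ 2) ∂μ :=
          mgf_le_exp_mul_integral_exp_mul_sq hint.1 hδ hI t
      _ ≤ exp (t ^ 2 / (4 * δ)) * M := by gcongr
      _ = exp (t ^ 2 / (4 * δ) + log M) := by rw [exp_add, exp_log (by linarith)]
      _ ≤ exp (c * t ^ 2 / 2) := exp_le_exp.2 (by nlinarith)

end ExpSquareMoment

section GaussianTails

variable {Ω : Type*} {m0 : MeasurableSpace Ω} {μ : Measure Ω} {Y : Ω → ℝ} {c : ℝ}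

def HasGaussianTails (μ : Measure Ω) (Y : Ω → ℝ) (c : ℝ) : Prop :=
  ∀ x : ℝ, 0 < x → μ {ω | Y ω > x} ≤ ENNReal.ofReal (exp (-(c * x ^ 2))) ∧
    μ {ω | -Y ω > x} ≤ ENNReal.ofReal (exp (-(c * x ^ 2)))

lemma ProbabilityTheory.HasSubgaussianMGF.hasGaussianTails [IsFiniteMeasure μ] {c : ℝ≥0}
    (h : HasSubgaussianMGF Y c μ) : HasGaussianTails μ Y (2 * (c : ℝ))⁻¹ := by
  have upper {Z : Ω → ℝ} (hZ : HasSubgaussianMGF Z c μ) (x : ℝ) (hx : 0 < x) :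
      μ {ω | Z ω > x} ≤ ENNReal.ofReal (exp (-((2 * (c : ℝ))⁻¹ * x ^ 2))) :=
    calc μ {ω | Z ω > x} ≤ μ {ω | x ≤ Z ω} := measure_mono fun ω (hω : x < Z ω) ↦ hω.le
      _ = ENNReal.ofReal (μ.real {ω | x ≤ Z ω}) := (ofReal_measureReal).symm
      _ ≤ ENNReal.ofReal (exp (-((2 * (c : ℝ))⁻¹ * x ^ 2))) := by
          refine ENNReal.ofReal_le_ofReal ((hZ.measure_ge_le hx.le).trans_eq ?_)
          ring_nf
  exact fun x hx ↦ ⟨upper h x hx, upper h.neg x hx⟩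

lemma HasGaussianTails.measure_lt_exp_mul_sq_le (h : HasGaussianTails μ Y c) (hc : 0 < c)
    {t : ℝ} (ht : 1 < t) :
    μ {ω | t < exp (c / 2 * Y ω ^ 2)} ≤ 2 * ENNReal.ofReal (t ^ (-2 : ℝ)) := by
  have hlog_t : 0 < log t := log_pos ht
  set r := √(2 / c * log t)
  have hr : 0 < r := sqrt_pos.2 (by positivity)
  have hsub : {ω | t < exp (c / 2 * Y ω ^ 2)} ⊆ {ω | Y ω > r} ∪ {ω | -Y ω > r} := by
    intro ω hω
    have hlog : log t < c / 2 * Y ω ^ 2 := (log_lt_iff_lt_exp (by linarith)).2 hω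
    have habs : r < |Y ω| := by
      rw [← sqrt_sq_eq_abs]
      refine sqrt_lt_sqrt (by positivity) ?_
      calc 2 / c * log t < 2 / c * (c / 2 * Y ω ^ 2) := by gcongr
        _ = Y ω ^ 2 := by field_simp
    exact lt_abs.1 habs
  have htail : exp (-(c * r ^ 2)) = t ^ (-2 : ℝ) := by
    rw [sq_sqrt (by positivity), rpow_def_of_pos (by linarith)]
    field_simp
  calc μ {ω | t < exp (c / 2 * Y ω ^ 2)} ≤ μ {ω | Y ω > r} + μ {ω | -Y ω > r} :=
        (measure_mono hsub).trans (measure_union_le _ _)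
    _ ≤ 2 * ENNReal.ofReal (t ^ (-2 : ℝ)) := by
        rw [two_mul, ← htail]
        exact add_le_add (h r hr).1 (h r hr).2

/-- Layer cake: the level sets above `1` have measure at most `2 t⁻²`, of integral `2`. -/
lemma HasGaussianTails.lintegral_exp_mul_sq_le_three [IsProbabilityMeasure μ] (hY : Measurable Y)
    (h : HasGaussianTails μ Y c) (hc : 0 < c) :
    ∫⁻ ω, ENNReal.ofReal (exp (c / 2 * Y ω ^ 2)) ∂μ ≤ 3 := by
  rw [lintegral_eq_lintegral_meas_lt μ (ae_of_all _ fun _ ↦ (exp_pos _).le)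
      (hY.pow_const 2 |>.const_mul _).exp.aemeasurable,
    ← Set.Ioc_union_Ioi_eq_Ioi zero_le_one,
    lintegral_union measurableSet_Ioi (Set.Ioc_disjoint_Ioi le_rfl)]
  have hlow : ∫⁻ t in Set.Ioc (0 : ℝ) 1, μ {ω | t < exp (c / 2 * Y ω ^ 2)} ≤ 1 :=
    calc _ ≤ ∫⁻ _ in Set.Ioc (0 : ℝ) 1, 1 :=
          setLIntegral_mono' measurableSet_Ioc fun _ _ ↦ prob_le_one
      _ = 1 := by simp
  have hhigh : ∫⁻ t in Set.Ioi (1 : ℝ), μ {ω | t < exp (c / 2 * Y ω ^ 2)} ≤ 2 :=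
    calc _ ≤ ∫⁻ t in Set.Ioi (1 : ℝ), 2 * ENNReal.ofReal (t ^ (-2 : ℝ)) :=
          setLIntegral_mono' measurableSet_Ioi fun _ ht ↦ h.measure_lt_exp_mul_sq_le hc ht
      _ = 2 * ENNReal.ofReal (∫ t in Set.Ioi (1 : ℝ), t ^ (-2 : ℝ)) := by
          rw [lintegral_const_mul' _ _ (by norm_num), ofReal_integral_eq_lintegral_ofReal
            (integrableOn_Ioi_rpow_of_lt (by norm_num) one_pos)
            ((ae_restrict_iff' measurableSet_Ioi).2 (ae_of_all _ fun t ht ↦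
              rpow_nonneg (zero_le_one.trans (le_of_lt ht)) _))]
      _ = 2 := by
          rw [integral_Ioi_rpow_of_lt (by norm_num) one_pos]
          norm_num
  calc _ ≤ (1 : ENNReal) + 2 := add_le_add hlow hhigh
    _ = 3 := by norm_num

end GaussianTails

section IdenticallyDistributed

variable {Ω : Type*} {m0 : MeasurableSpace Ω} {μ : Measure Ω} {ι : Type*} {X : ι → Ω → ℝ}
  {s : Finset ι} {c : ℝ≥0}

lemma ProbabilityTheory.HasSubgaussianMGF.sum_div_card (hindep : iIndepFun X μ)
    (h : ∀ i ∈ s, HasSubgaussianMGF (X i) c μ) :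
    HasSubgaussianMGF (fun ω ↦ (∑ i ∈ s, X i ω) / s.card) (c / s.card) μ := by
  convert (HasSubgaussianMGF.sum_of_iIndepFun hindep h).const_mul (s.card : ℝ)⁻¹ using 1
  · simp only [div_eq_inv_mul]
  · ext
    change (c : ℝ) / s.card = (s.card : ℝ)⁻¹ ^ 2 * ((∑ _ ∈ s, c : ℝ≥0) : ℝ)
    rw [NNReal.coe_sum, Finset.sum_const, nsmul_eq_mul]
    rcases eq_or_ne (s.card : ℝ) 0 with hs | hs
    · simp [hs]
    · field_simp

/-- Integrability of `exp (t X j)` comes for free: otherwise its junk mgf `0` would make the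
positive mgf of the sum vanish. -/
lemma ProbabilityTheory.HasSubgaussianMGF.of_sum_div_card [IsProbabilityMeasure μ]
    (hmeas : ∀ i, Measurable (X i)) (hindep : iIndepFun X μ) {j : ι} (hj : j ∈ s)
    (hid : ∀ i ∈ s, ∀ k ∈ s, IdentDistrib (X i) (X k) μ μ)
    (h : HasSubgaussianMGF (fun ω ↦ (∑ i ∈ s, X i ω) / s.card) (c / s.card) μ) :
    HasSubgaussianMGF (X j) c μ := by
  have hs : s.card ≠ 0 := Finset.card_ne_zero_of_mem hj
  have hsum : HasSubgaussianMGF (∑ i ∈ s, X i) (s.card * c) μ := by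
    convert h.const_mul (s.card : ℝ) using 1
    · ext ω
      simp only [Finset.sum_apply]
      field_simp
    · ext
      change (s.card : ℝ) * c = (s.card : ℝ) ^ 2 * ((c / s.card : ℝ≥0) : ℝ)
      rw [NNReal.coe_div, NNReal.coe_natCast]
      field_simp
  have hmgf (t : ℝ) : mgf (∑ i ∈ s, X i) μ t = mgf (X j) μ t ^ s.card :=
    mgf_sum_of_identDistrib hmeas hindep hid hj t
  refine ⟨fun t ↦ Integrable.of_integral_ne_zero fun h0 ↦ ?_, fun t ↦ ?_⟩
  · have hpos := mgf_pos (hsum.integrable_exp_mul t)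
    rw [hmgf, mgf, h0, zero_pow hs] at hpos
    exact lt_irrefl 0 hpos
  · refine (pow_le_pow_iff_left₀ mgf_nonneg (exp_pos _).le hs).1 ?_
    rw [← hmgf, ← exp_nat_mul]
    refine (hsum.mgf_le t).trans_eq ?_
    congr 1
    push_cast
    ring

end IdenticallyDistributed

section SampleMean

variable {Ω : Type*} {m0 : MeasurableSpace Ω} {μ : Measure Ω} {X : ℕ → Ω → ℝ}

noncomputable def sampleMean (X : ℕ → Ω → ℝ) (n : ℕ) (ω : Ω) : ℝ :=
  (∑ k ∈ Finset.Icc 1 n, X k ω) / n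

lemma card_subtype_Icc_one (n : ℕ) : ((Finset.Icc 1 n).subtype (1 ≤ ·)).card = n := by
  rw [Finset.card_subtype, Finset.filter_true_of_mem fun k hk ↦ (Finset.mem_Icc.1 hk).1,
    Nat.card_Icc, Nat.add_sub_cancel]

lemma sampleMean_eq_sum_subtype_div_card (X : ℕ → Ω → ℝ) (n : ℕ) :
    sampleMean X n = fun ω ↦ (∑ i ∈ (Finset.Icc 1 n).subtype (1 ≤ ·), X i ω) /
      ((Finset.Icc 1 n).subtype (1 ≤ ·)).card := by
  ext ω
  rw [Finset.sum_subtype_of_mem (fun k ↦ X k ω) fun k hk ↦ (Finset.mem_Icc.1 hk).1,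
    card_subtype_Icc_one, sampleMean]

lemma integral_sampleMean (hid : ∀ i, 1 ≤ i → IdentDistrib (X i) (X 1) μ μ)
    (hint : Integrable (X 1) μ) (h0 : μ[X 1] = 0) (n : ℕ) :
    Integrable (sampleMean X n) μ ∧ μ[sampleMean X n] = 0 := by
  have hint_k : ∀ k ∈ Finset.Icc 1 n, Integrable (X k) μ :=
    fun k hk ↦ (hid k (Finset.mem_Icc.1 hk).1).integrable_iff.2 hint
  refine ⟨(integrable_finsetSum _ hint_k).div_const _, ?_⟩
  simp only [sampleMean]
  rw [integral_div, integral_finsetSum _ hint_k,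
    Finset.sum_eq_zero fun k hk ↦ (hid k (Finset.mem_Icc.1 hk).1).integral_eq.trans h0, zero_div]

variable [IsProbabilityMeasure μ]

theorem hasGaussianTails_sampleMean (hindep : iIndepFun (fun i : {i : ℕ // 1 ≤ i} ↦ X i) μ)
    (hid : ∀ i, 1 ≤ i → IdentDistrib (X i) (X 1) μ μ) {c : ℝ≥0}
    (h : HasSubgaussianMGF (X 1) c μ) (n : ℕ) :
    HasGaussianTails μ (sampleMean X n) (n * (2 * (c : ℝ))⁻¹) := by
  have hmean := HasSubgaussianMGF.sum_div_card hindep (s := (Finset.Icc 1 n).subtype (1 ≤ ·))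
    fun i _ ↦ h.congr_identDistrib (hid i i.2).symm
  rw [← sampleMean_eq_sum_subtype_div_card, card_subtype_Icc_one] at hmean
  convert hmean.hasGaussianTails using 1
  rw [NNReal.coe_div, NNReal.coe_natCast, mul_div_assoc', div_eq_mul_inv, mul_inv, mul_inv,
    inv_inv]
  ring

theorem HasGaussianTails.hasSubgaussianMGF_of_sampleMean (hmeas : ∀ i, Measurable (X i))
    (hindep : iIndepFun (fun i : {i : ℕ // 1 ≤ i} ↦ X i) μ)
    (hid : ∀ i, 1 ≤ i → IdentDistrib (X i) (X 1) μ μ) (hint : Integrable (X 1) μ)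
    (h0 : μ[X 1] = 0) {c₁ : ℝ} (hc₁ : 0 < c₁) {n : ℕ} (hn : 1 ≤ n)
    (h : HasGaussianTails μ (sampleMean X n) (n * c₁)) {c : ℝ≥0}
    (hc : (1 + 4 * log 3) / c₁ ≤ c) :
    HasSubgaussianMGF (X 1) c μ := by
  obtain ⟨hint_mean, h0_mean⟩ := integral_sampleMean hid hint h0 n
  have hmeas_mean : Measurable (sampleMean X n) :=
    (Finset.measurable_sum _ fun k _ ↦ hmeas k).div_const _
  have hmeas_exp : Measurable fun ω ↦ exp (n * c₁ / 2 * sampleMean X n ω ^ 2) := by fun_prop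
  have hlint := h.lintegral_exp_mul_sq_le_three hmeas_mean (by positivity)
  have hI := (lintegral_ofReal_ne_top_iff_integrable hmeas_exp.aestronglyMeasurable
    (ae_of_all _ fun _ ↦ (exp_pos _).le)).1 (hlint.trans_lt (by norm_num)).ne
  have hM : ∫ ω, exp (n * c₁ / 2 * sampleMean X n ω ^ 2) ∂μ ≤ 3 := by
    rw [integral_eq_lintegral_of_nonneg_ae (ae_of_all _ fun _ ↦ (exp_pos _).le)
      hmeas_exp.aestronglyMeasurable]
    exact ENNReal.toReal_le_of_le_ofReal (by norm_num) (hlint.trans_eq (by norm_num))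
  have hmean : HasSubgaussianMGF (sampleMean X n) (c / n) μ := by
    refine hasSubgaussianMGF_of_integral_exp_mul_sq_le hint_mean h0_mean (by positivity) hI hM ?_
    rw [NNReal.coe_div, NNReal.coe_natCast, show 2 * (n * c₁ / 2) = c₁ * n by ring, ← div_div]
    gcongr
  rw [sampleMean_eq_sum_subtype_div_card] at hmean
  set s := (Finset.Icc 1 n).subtype (1 ≤ ·)
  have hcard : (s.card : ℝ≥0) = n := by rw [card_subtype_Icc_one]
  rw [← hcard] at hmean
  have hid_s : ∀ i ∈ s, ∀ k ∈ s, IdentDistrib (X i) (X k) μ μ :=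
    fun i _ k _ ↦ (hid i i.2).trans (hid k k.2).symm
  have h_one : (⟨1, le_rfl⟩ : {i : ℕ // 1 ≤ i}) ∈ s :=
    Finset.mem_subtype.2 (Finset.mem_Icc.2 ⟨le_rfl, hn⟩)
  exact HasSubgaussianMGF.of_sum_div_card (X := fun i : {i : ℕ // 1 ≤ i} ↦ X i)
    (fun i ↦ hmeas i) hindep h_one hid_s hmean

end SampleMean

/-- Extension of Hoeffding's inequality (Corollary 1.3): for i.i.d. centered random
variables, a Gaussian deviation bound valid for all `n ≥ 1` and `x > 0` holds iff
`exp (δ X₁²)` has finite expectation for some `δ > 0`; moreover, if the Gaussian bound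
holds for a single `n ≥ 1` with constant `c₁` then it holds for all `n ≥ 1` with a
constant `c₂` depending only on `c₁`. -/
theorem iid_hoeffding_extension :
    (∀ {Ω : Type*} {m0 : MeasurableSpace Ω} (μ : Measure Ω), IsProbabilityMeasure μ →
      ∀ (X : ℕ → Ω → ℝ),
        (∀ i, Measurable (X i)) →
        iIndepFun
          (fun i : {i : ℕ // 1 ≤ i} => X i) μ →
        (∀ i : ℕ, 1 ≤ i → IdentDistrib (X i) (X 1) μ μ) →
        Integrable (X 1) μ → (∫ ω, X 1 ω ∂μ) = 0 →
        ((∃ c : ℝ, 0 < c ∧ ∀ n : ℕ, 1 ≤ n → ∀ x : ℝ, 0 < x →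
            μ {ω | (∑ k ∈ Finset.Icc 1 n, X k ω) / n > x} ≤
              ENNReal.ofReal (Real.exp (-(n * c * x ^ 2))) ∧
            μ {ω | -((∑ k ∈ Finset.Icc 1 n, X k ω) / n) > x} ≤
              ENNReal.ofReal (Real.exp (-(n * c * x ^ 2)))) ↔
          (∃ δ : ℝ, 0 < δ ∧
            (∫⁻ ω, ENNReal.ofReal (Real.exp (δ * (X 1 ω) ^ 2)) ∂μ) < ⊤))) ∧
    (∀ c₁ : ℝ, 0 < c₁ →
      ∃ c₂ : ℝ, 0 < c₂ ∧
        ∀ {Ω : Type*} {m0 : MeasurableSpace Ω} (μ : Measure Ω), IsProbabilityMeasure μ →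
        ∀ (X : ℕ → Ω → ℝ),
          (∀ i, Measurable (X i)) →
          iIndepFun
            (fun i : {i : ℕ // 1 ≤ i} => X i) μ →
          (∀ i : ℕ, 1 ≤ i → IdentDistrib (X i) (X 1) μ μ) →
          Integrable (X 1) μ → (∫ ω, X 1 ω ∂μ) = 0 →
          (∃ n : ℕ, 1 ≤ n ∧ ∀ x : ℝ, 0 < x →
            μ {ω | (∑ k ∈ Finset.Icc 1 n, X k ω) / n > x} ≤
              ENNReal.ofReal (Real.exp (-(n * c₁ * x ^ 2))) ∧
            μ {ω | -((∑ k ∈ Finset.Icc 1 n, X k ω) / n) > x} ≤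
              ENNReal.ofReal (Real.exp (-(n * c₁ * x ^ 2)))) →
          ∀ n : ℕ, 1 ≤ n → ∀ x : ℝ, 0 < x →
            μ {ω | (∑ k ∈ Finset.Icc 1 n, X k ω) / n > x} ≤
              ENNReal.ofReal (Real.exp (-(n * c₂ * x ^ 2))) ∧
            μ {ω | -((∑ k ∈ Finset.Icc 1 n, X k ω) / n) > x} ≤
              ENNReal.ofReal (Real.exp (-(n * c₂ * x ^ 2)))) := by
  refine ⟨fun μ _ X hmeas hindep hid hint h0 ↦ ⟨?_, ?_⟩, fun c₁ hc₁ ↦ ?_⟩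
  · rintro ⟨c, hc, htails⟩
    have h1 : HasGaussianTails μ (X 1) c := fun x hx ↦ by
      simpa [sampleMean] using htails 1 le_rfl x hx
    exact ⟨c / 2, by positivity,
      (h1.lintegral_exp_mul_sq_le_three (hmeas 1) hc).trans_lt (by norm_num)⟩
  · rintro ⟨δ, hδ, hfin⟩
    have hmeas_exp : Measurable fun ω ↦ exp (δ * X 1 ω ^ 2) := by fun_prop
    have hI := (lintegral_ofReal_ne_top_iff_integrable hmeas_exp.aestronglyMeasurable
      (ae_of_all _ fun _ ↦ (exp_pos _).le)).1 hfin.ne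
    set M := ∫ ω, exp (δ * X 1 ω ^ 2) ∂μ
    have hc : 0 < (1 + 4 * log M) / (2 * δ) := by
      have := log_nonneg (one_le_integral_exp_mul_sq hδ.le hI)
      positivity
    set c := ((1 + 4 * log M) / (2 * δ)).toNNReal
    have hX1 := hasSubgaussianMGF_of_integral_exp_mul_sq_le hint h0 hδ hI le_rfl
      (le_coe_toNNReal _ : _ ≤ (c : ℝ))
    exact ⟨(2 * c)⁻¹, by simpa [c] using hc, fun n _ ↦ hasGaussianTails_sampleMean hindep hid hX1 n⟩
  · set c := ((1 + 4 * log 3) / c₁).toNNReal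
    have hc : 0 < (1 + 4 * log 3) / c₁ := by positivity
    refine ⟨(2 * c)⁻¹, by simpa [c] using hc,
      fun μ _ X hmeas hindep hid hint h0 ⟨n₀, hn₀, htails⟩ n _ ↦ ?_⟩
    have hX1 := HasGaussianTails.hasSubgaussianMGF_of_sampleMean hmeas hindep hid hint h0 hc₁ hn₀
      htails (le_coe_toNNReal _ : _ ≤ (c : ℝ))
    exact hasGaussianTails_sampleMean hindep hid hX1 n
end

section
/- Let (X_i)_{1≤i≤n} be a finite sequence of supermartingale differences adapted to a filtration (F_i). If for some constant K > 0 and all i ∈ {1,…,n}, almost surely E[exp(|X_i|) | F_{i-1}] ≤ K, then: (a) E[exp(t S_n)] ≤ exp(nK t²/(1−t)) for all t ∈ (0,1); (b) P[S_n/n > x] ≤ exp(−n(√(x+K) − √K)²) for all x > 0; and consequently (c) P[S_n/n > x] ≤ exp(−n x²/(K(1+√2)²)) if 0 < x ≤ K, and P[S_n/n > x] ≤ exp(−n x/(1+√2)²) if x > K. -/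
/-!
For `0 ≤ t ≤ 1` one has `exp (t x) ≤ 1 + t x + t² exp |x|`, so the two conditional hypotheses give
`E[exp (t X_i) | F_{i-1}] ≤ 1 + t² K`. Conditioning successively on `F_{n-1}, …, F_0` yields
`E[exp (t S_n)] ≤ (1 + t² K)ⁿ ≤ exp (n K t² / (1 - t))`, and (b) is the Chernoff bound at the
minimiser `t = 1 - √K / √(x + K)` of `n K t² / (1 - t) - t n x`. For (c), write
`√(x + K) - √K = x / (√(x + K) + √K)` and bound the denominator by `(1 + √2) √(max x K)`.
-/

open MeasureTheory ProbabilityTheory Filter Real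
open scoped ENNReal

lemma exp_mul_le_one_add_mul_add_sq_mul_exp {t y : ℝ} (ht0 : 0 ≤ t) (ht1 : t ≤ 1) (hy : 0 ≤ y) :
    exp (t * y) ≤ 1 + t * y + t ^ 2 * exp y := by
  let F : ℝ → ℝ := fun s => 1 + t * s + t ^ 2 * exp s - exp (t * s)
  have hF : ∀ s, HasDerivAt F (t + t ^ 2 * exp s - t * exp (t * s)) s := fun s => by
    refine ((((hasDerivAt_id s).const_mul t).const_add 1).add
      ((hasDerivAt_exp s).const_mul (t ^ 2)) |>.sub
        ((hasDerivAt_id s).const_mul t).exp).congr_deriv ?_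
    simp only [id, mul_one]; ring
  have hF_mono : MonotoneOn F (Set.Ici 0) := by
    refine monotoneOn_of_hasDerivWithinAt_nonneg (convex_Ici 0)
      (fun s _ => (hF s).continuousAt.continuousWithinAt) (fun s _ => (hF s).hasDerivWithinAt)
      fun s _ => ?_
    -- the derivative is at least `t²`, by convexity of `exp`
    have hconv : exp (t * s) ≤ (1 - t) + t * exp s := by
      simpa using convexOn_exp.2 (Set.mem_univ 0) (Set.mem_univ s) (by linarith) ht0 (by ring)
    nlinarith [exp_pos s]
  have := hF_mono Set.self_mem_Ici hy hy
  simp only [F, mul_zero, exp_zero] at this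
  nlinarith

lemma exp_mul_le_one_add_mul_add_sq_mul_exp_abs {t : ℝ} (ht0 : 0 ≤ t) (ht1 : t ≤ 1) (x : ℝ) :
    exp (t * x) ≤ 1 + t * x + t ^ 2 * exp |x| := by
  rcases le_total 0 x with hx | hx
  · rw [abs_of_nonneg hx]
    exact exp_mul_le_one_add_mul_add_sq_mul_exp ht0 ht1 hx
  · rw [abs_of_nonpos hx]
    have h := exp_mul_le_one_add_mul_add_sq_mul_exp ht0 ht1 (neg_nonneg.2 hx)
    -- `exp (-s) + s ≤ exp s - s` for `s ≥ 0`, which is `s ≤ sinh s`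
    have hsinh := self_le_sinh_iff.2 (mul_nonneg ht0 (neg_nonneg.2 hx))
    rw [sinh_eq, mul_neg, neg_neg] at hsinh
    rw [mul_neg] at h
    linarith

lemma one_add_sq_mul_pow_le_exp {K t : ℝ} (hK : 0 ≤ K) (ht0 : 0 ≤ t) (ht1 : t < 1) (n : ℕ) :
    (1 + t ^ 2 * K) ^ n ≤ exp (n * K * t ^ 2 / (1 - t)) :=
  calc (1 + t ^ 2 * K) ^ n ≤ exp (t ^ 2 * K) ^ n := by
        gcongr
        linarith [add_one_le_exp (t ^ 2 * K)]
    _ = exp (n * K * t ^ 2) := by rw [← exp_nat_mul]; ring_nf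
    _ ≤ exp (n * K * t ^ 2 / (1 - t)) := by
        gcongr
        exact le_div_self (by positivity) (by linarith) (by linarith)

lemma sq_div_le_sq_sqrt_add_sub_sqrt {x K M : ℝ} (hx : 0 ≤ x) (hK : 0 ≤ K) (hKM : K ≤ M)
    (hxM : x ≤ M) : x ^ 2 / ((1 + √2) ^ 2 * M) ≤ (√(x + K) - √K) ^ 2 := by
  have hsum : √(x + K) + √K ≤ (1 + √2) * √M := by
    have : √(x + K) ≤ √2 * √M := by
      rw [← sqrt_mul zero_le_two]; exact sqrt_le_sqrt (by linarith)
    linarith [sqrt_le_sqrt hKM]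
  have hprod : (√(x + K) - √K) * (√(x + K) + √K) = x := by
    rw [mul_comm, ← sq_sub_sq, sq_sqrt (by linarith), sq_sqrt hK]; ring
  refine div_le_of_le_mul₀ (by have := hK.trans hKM; positivity) (sq_nonneg _) ?_
  calc x ^ 2 = (√(x + K) - √K) ^ 2 * (√(x + K) + √K) ^ 2 := by rw [← mul_pow, hprod]
    _ ≤ (√(x + K) - √K) ^ 2 * ((1 + √2) * √M) ^ 2 := by gcongr
    _ = (√(x + K) - √K) ^ 2 * ((1 + √2) ^ 2 * M) := by
        rw [mul_pow, sq_sqrt (hK.trans hKM)]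

section

variable {Ω : Type*} {m m0 : MeasurableSpace Ω} {μ : Measure Ω}

lemma integrable_exp_mul_of_integrable_exp_abs {X : Ω → ℝ} (hX : AEStronglyMeasurable X μ)
    (hexp : Integrable (fun ω => exp |X ω|) μ) {t : ℝ} (ht : |t| ≤ 1) :
    Integrable (fun ω => exp (t * X ω)) μ := by
  refine hexp.mono (by fun_prop) (ae_of_all _ fun ω => ?_)
  simp only [norm_eq_abs, abs_exp, exp_le_exp]
  calc t * X ω ≤ |t| * |X ω| := by rw [← abs_mul]; exact le_abs_self _
    _ ≤ |X ω| := mul_le_of_le_one_left (abs_nonneg _) ht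

lemma condExp_exp_mul_le [IsFiniteMeasure μ] (hm : m ≤ m0) {X : Ω → ℝ} (hX : Integrable X μ)
    (hexp : Integrable (fun ω => exp |X ω|) μ) (hX_le : ∀ᵐ ω ∂μ, μ[X|m] ω ≤ 0) {K : ℝ}
    (hexp_le : ∀ᵐ ω ∂μ, μ[fun ω => exp (|X ω|)|m] ω ≤ K) {t : ℝ} (ht0 : 0 ≤ t) (ht1 : t ≤ 1) :
    ∀ᵐ ω ∂μ, μ[fun ω => exp (t * X ω)|m] ω ≤ 1 + t ^ 2 * K := by
  let E : Ω → ℝ := fun ω => exp |X ω|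
  have hlin : μ[(fun _ => 1) + (t • X + t ^ 2 • E)|m]
      =ᵐ[μ] (fun _ => 1) + (t • μ[X|m] + t ^ 2 • μ[E|m]) :=
    (condExp_add (integrable_const 1) ((hX.smul t).add (hexp.smul _)) m).trans
      ((EventuallyEq.of_eq (condExp_const hm 1)).add
        ((condExp_add (hX.smul t) (hexp.smul _) m).trans
          ((condExp_smul t X m).add (condExp_smul _ E m))))
  have hmono := condExp_mono (m := m) (integrable_exp_mul_of_integrable_exp_abs hX.1 hexp
      (by rwa [abs_of_nonneg ht0]))
    ((integrable_const 1).add ((hX.smul t).add (hexp.smul (t ^ 2))))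
    (ae_of_all _ fun ω => by
      simpa [E, add_assoc] using exp_mul_le_one_add_mul_add_sq_mul_exp_abs ht0 ht1 (X ω))
  filter_upwards [hmono, hlin, hX_le, hexp_le] with ω h hlin hX_le hexp_le
  rw [hlin] at h
  simp only [Pi.add_apply, Pi.smul_apply, smul_eq_mul] at h
  nlinarith [mul_nonpos_of_nonneg_of_nonpos ht0 hX_le,
    mul_le_mul_of_nonneg_left hexp_le (sq_nonneg t)]

lemma lintegral_mul_condLExp (hm : m ≤ m0) [SigmaFinite (μ.trim hm)] {Z f : Ω → ℝ≥0∞}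
    (hZ : Measurable[m] Z) (hf : AEMeasurable f μ) :
    ∫⁻ ω, Z ω * μ⁻[f|m] ω ∂μ = ∫⁻ ω, Z ω * f ω ∂μ := by
  refine @Measurable.ennreal_induction Ω m
    (fun Z => ∫⁻ ω, Z ω * μ⁻[f|m] ω ∂μ = ∫⁻ ω, Z ω * f ω ∂μ) (fun c s hs => ?_)
    (fun Z₁ Z₂ _ hZ₁ _ h₁ h₂ => ?_) (fun Z hZ hZ_mono h => ?_) Z hZ
  · simp_rw [← Set.indicator_mul_left]
    rw [lintegral_indicator (hm s hs), lintegral_indicator (hm s hs),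
      lintegral_const_mul _ (measurable_condLExp' m μ f), lintegral_const_mul'' _ hf.restrict,
      setLIntegral_condLExp hm μ f hs]
  · have hZ₁' : Measurable[m0] Z₁ := hZ₁.mono hm le_rfl
    simp_rw [Pi.add_apply, add_mul]
    rw [lintegral_add_left (by fun_prop), lintegral_add_left' (by fun_prop), h₁, h₂]
  · have hZ' (n : ℕ) : Measurable[m0] (Z n) := (hZ n).mono hm le_rfl
    simp_rw [ENNReal.iSup_mul]
    rw [lintegral_iSup (f := fun n ω => Z n ω * μ⁻[f|m] ω) (fun n => by fun_prop)
        fun i j hij ω => mul_le_mul_left (hZ_mono hij ω) _,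
      lintegral_iSup' (f := fun n ω => Z n ω * f ω) (fun n => by fun_prop)
        (ae_of_all _ fun ω i j hij => mul_le_mul_left (hZ_mono hij ω) _)]
    simp_rw [h]

lemma lintegral_mul_ofReal_le_of_condExp_le [IsFiniteMeasure μ] (hm : m ≤ m0) {Z : Ω → ℝ≥0∞}
    (hZ : Measurable[m] Z) {W : Ω → ℝ} (hW : Integrable W μ) (hW0 : 0 ≤ᵐ[μ] W) {c : ℝ}
    (hc : ∀ᵐ ω ∂μ, μ[W|m] ω ≤ c) :
    ∫⁻ ω, Z ω * ENNReal.ofReal (W ω) ∂μ ≤ ENNReal.ofReal c * ∫⁻ ω, Z ω ∂μ :=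
  calc ∫⁻ ω, Z ω * ENNReal.ofReal (W ω) ∂μ
      = ∫⁻ ω, Z ω * μ⁻[fun ω => ENNReal.ofReal (W ω)|m] ω ∂μ :=
        (lintegral_mul_condLExp hm hZ hW.1.aemeasurable.ennreal_ofReal).symm
    _ ≤ ∫⁻ ω, Z ω * ENNReal.ofReal c ∂μ := lintegral_mono_ae <| by
        filter_upwards [condLExp_ofReal m hW hW0, hc] with ω h hc
        rw [h]
        gcongr
    _ = ENNReal.ofReal c * ∫⁻ ω, Z ω ∂μ := by
        rw [lintegral_mul_const' _ _ ENNReal.ofReal_ne_top, mul_comm]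

lemma lintegral_exp_sum_le_pow [IsProbabilityMeasure μ] (ℱ : Filtration ℕ m0) {Y : ℕ → Ω → ℝ}
    {c : ℝ} (n : ℕ) (hY : ∀ i ∈ Finset.Icc 1 n, StronglyMeasurable[ℱ i] (Y i))
    (hexp : ∀ i ∈ Finset.Icc 1 n, Integrable (fun ω => exp (Y i ω)) μ)
    (hc : ∀ i ∈ Finset.Icc 1 n, ∀ᵐ ω ∂μ, μ[fun ω => exp (Y i ω)|ℱ (i - 1)] ω ≤ c) :
    ∫⁻ ω, ENNReal.ofReal (exp (∑ i ∈ Finset.Icc 1 n, Y i ω)) ∂μ ≤ ENNReal.ofReal c ^ n := by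
  induction n with
  | zero => simp
  | succ n ih =>
    have hsub : Finset.Icc 1 n ⊆ Finset.Icc 1 (n + 1) := Finset.Icc_subset_Icc_right n.le_succ
    have hlast : n + 1 ∈ Finset.Icc 1 (n + 1) := Finset.mem_Icc.2 ⟨n.succ_pos, le_rfl⟩
    have hS : Measurable[ℱ n] fun ω => ENNReal.ofReal (exp (∑ i ∈ Finset.Icc 1 n, Y i ω)) :=
      (Finset.measurable_sum _ fun i hi =>
        ((hY i (hsub hi)).mono (ℱ.mono (Finset.mem_Icc.1 hi).2)).measurable).exp.ennreal_ofReal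
    calc ∫⁻ ω, ENNReal.ofReal (exp (∑ i ∈ Finset.Icc 1 (n + 1), Y i ω)) ∂μ
        = ∫⁻ ω, ENNReal.ofReal (exp (∑ i ∈ Finset.Icc 1 n, Y i ω)) *
            ENNReal.ofReal (exp (Y (n + 1) ω)) ∂μ := by
          simp_rw [Finset.sum_Icc_succ_top (Nat.le_add_left 1 n), exp_add,
            ENNReal.ofReal_mul (exp_pos _).le]
      _ ≤ ENNReal.ofReal c * ∫⁻ ω, ENNReal.ofReal (exp (∑ i ∈ Finset.Icc 1 n, Y i ω)) ∂μ :=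
          lintegral_mul_ofReal_le_of_condExp_le (ℱ.le n) hS (hexp _ hlast)
            (ae_of_all _ fun ω => (exp_pos _).le) (by simpa using hc _ hlast)
      _ ≤ ENNReal.ofReal c * ENNReal.ofReal c ^ n := by
          gcongr
          exact ih (fun i hi => hY i (hsub hi)) (fun i hi => hexp i (hsub hi))
            fun i hi => hc i (hsub hi)
      _ = ENNReal.ofReal c ^ (n + 1) := (pow_succ' _ _).symm

lemma lintegral_exp_mul_sum_le_pow [IsProbabilityMeasure μ] (ℱ : Filtration ℕ m0) (n : ℕ)
    {X : ℕ → Ω → ℝ} {K : ℝ} (hadp : ∀ i ∈ Finset.Icc 1 n, StronglyMeasurable[ℱ i] (X i))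
    (hint : ∀ i ∈ Finset.Icc 1 n, Integrable (X i) μ)
    (hsmg : ∀ i ∈ Finset.Icc 1 n, ∀ᵐ ω ∂μ, μ[X i|ℱ (i - 1)] ω ≤ 0)
    (hexpint : ∀ i ∈ Finset.Icc 1 n, Integrable (fun ω => exp |X i ω|) μ)
    (hcond : ∀ i ∈ Finset.Icc 1 n, ∀ᵐ ω ∂μ, μ[fun ω => exp (|X i ω|)|ℱ (i - 1)] ω ≤ K)
    {t : ℝ} (ht0 : 0 ≤ t) (ht1 : t ≤ 1) :
    ∫⁻ ω, ENNReal.ofReal (exp (t * ∑ i ∈ Finset.Icc 1 n, X i ω)) ∂μ ≤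
      ENNReal.ofReal (1 + t ^ 2 * K) ^ n := by
  simp_rw [Finset.mul_sum]
  exact lintegral_exp_sum_le_pow ℱ n (fun i hi => (hadp i hi).const_mul t)
    (fun i hi => integrable_exp_mul_of_integrable_exp_abs (hint i hi).1 (hexpint i hi)
      (by rwa [abs_of_nonneg ht0]))
    fun i hi => condExp_exp_mul_le (ℱ.le _) (hint i hi) (hexpint i hi) (hsmg i hi) (hcond i hi)
      ht0 ht1

lemma measure_lt_le_of_lintegral_exp_le {S : Ω → ℝ} (hS : AEMeasurable S μ) {t a B : ℝ}
    (ht : 0 ≤ t) (hB : ∫⁻ ω, ENNReal.ofReal (exp (t * S ω)) ∂μ ≤ ENNReal.ofReal (exp B)) :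
    μ {ω | a < S ω} ≤ ENNReal.ofReal (exp (B - t * a)) :=
  calc μ {ω | a < S ω}
      ≤ μ {ω | ENNReal.ofReal (exp (t * a)) ≤ ENNReal.ofReal (exp (t * S ω))} :=
        measure_mono fun ω hω =>
          ENNReal.ofReal_le_ofReal (exp_le_exp.2 (mul_le_mul_of_nonneg_left (le_of_lt hω) ht))
    _ ≤ (∫⁻ ω, ENNReal.ofReal (exp (t * S ω)) ∂μ) / ENNReal.ofReal (exp (t * a)) :=
        meas_ge_le_lintegral_div (by fun_prop) (by simp [exp_pos]) ENNReal.ofReal_ne_top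
    _ ≤ ENNReal.ofReal (exp B) / ENNReal.ofReal (exp (t * a)) := by gcongr
    _ = ENNReal.ofReal (exp (B - t * a)) := by
        rw [exp_sub, ENNReal.ofReal_div_of_pos (exp_pos _)]

lemma measure_mul_lt_le_of_lintegral_exp_le {S : Ω → ℝ} (hS : AEMeasurable S μ) {N K x : ℝ}
    (hK : 0 < K) (hx : 0 < x)
    (hmgf : ∀ t ∈ Set.Ioo (0 : ℝ) 1,
      ∫⁻ ω, ENNReal.ofReal (exp (t * S ω)) ∂μ ≤ ENNReal.ofReal (exp (N * K * t ^ 2 / (1 - t)))) :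
    μ {ω | N * x < S ω} ≤ ENNReal.ofReal (exp (-(N * (√(x + K) - √K) ^ 2))) := by
  set a := √K
  set b := √(x + K)
  have ha : 0 < a := sqrt_pos.2 hK
  have hab : a < b := sqrt_lt_sqrt hK.le (by linarith)
  have hb : 0 < b := ha.trans hab
  have ht0 : 0 < 1 - a / b := by rw [sub_pos, div_lt_one hb]; exact hab
  have ht1 : 1 - a / b < 1 := by linarith [div_pos ha hb]
  refine (measure_lt_le_of_lintegral_exp_le hS ht0.le (hmgf _ ⟨ht0, ht1⟩)).trans_eq ?_
  have hK' : K = a ^ 2 := (sq_sqrt hK.le).symm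
  have hx' : x = b ^ 2 - a ^ 2 := by rw [sq_sqrt (by linarith), sq_sqrt hK.le]; ring
  rw [hK', hx']
  congr 2
  field_simp [ha.ne', hb.ne']
  ring

end

/-- Theorem 2.1: exponential inequalities for supermartingale differences under the
conditional moment condition `E[exp |X_i| | F_{i-1}] ≤ K`. -/
theorem supermartingale_bernstein_inequality
    {Ω : Type*} {m0 : MeasurableSpace Ω} (μ : Measure Ω) [IsProbabilityMeasure μ]
    (ℱ : Filtration ℕ m0) (n : ℕ) (hn : 1 ≤ n) (X : ℕ → Ω → ℝ) (K : ℝ) (hK : 0 < K)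
    (hadp : ∀ i ∈ Finset.Icc 1 n, StronglyMeasurable[ℱ i] (X i))
    (hint : ∀ i ∈ Finset.Icc 1 n, Integrable (X i) μ)
    (hsmg : ∀ i ∈ Finset.Icc 1 n, ∀ᵐ ω ∂μ, (μ[X i|ℱ (i - 1)]) ω ≤ 0)
    (hexpint : ∀ i ∈ Finset.Icc 1 n, Integrable (fun ω => Real.exp |X i ω|) μ)
    (hcond : ∀ i ∈ Finset.Icc 1 n,
      ∀ᵐ ω ∂μ, (μ[fun ω' => Real.exp (|X i ω'|)|ℱ (i - 1)]) ω ≤ K) :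
    (∀ t : ℝ, t ∈ Set.Ioo (0 : ℝ) 1 →
      (∫⁻ ω, ENNReal.ofReal (Real.exp (t * ∑ i ∈ Finset.Icc 1 n, X i ω)) ∂μ) ≤
        ENNReal.ofReal (Real.exp (n * K * t ^ 2 / (1 - t)))) ∧
    (∀ x : ℝ, 0 < x →
      μ {ω | (∑ i ∈ Finset.Icc 1 n, X i ω) / n > x} ≤
        ENNReal.ofReal (Real.exp (-(n * (Real.sqrt (x + K) - Real.sqrt K) ^ 2)))) ∧
    (∀ x : ℝ, 0 < x → x ≤ K →
      μ {ω | (∑ i ∈ Finset.Icc 1 n, X i ω) / n > x} ≤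
        ENNReal.ofReal (Real.exp (-(n * x ^ 2 / (K * (1 + Real.sqrt 2) ^ 2))))) ∧
    (∀ x : ℝ, K < x →
      μ {ω | (∑ i ∈ Finset.Icc 1 n, X i ω) / n > x} ≤
        ENNReal.ofReal (Real.exp (-(n * x / (1 + Real.sqrt 2) ^ 2)))) := by
  have hmgf : ∀ t ∈ Set.Ioo (0 : ℝ) 1,
      ∫⁻ ω, ENNReal.ofReal (exp (t * ∑ i ∈ Finset.Icc 1 n, X i ω)) ∂μ ≤
        ENNReal.ofReal (exp (n * K * t ^ 2 / (1 - t))) := fun t ⟨ht0, ht1⟩ => by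
    refine (lintegral_exp_mul_sum_le_pow ℱ n hadp hint hsmg hexpint hcond ht0.le ht1.le).trans ?_
    rw [← ENNReal.ofReal_pow (by positivity)]
    exact ENNReal.ofReal_le_ofReal (one_add_sq_mul_pow_le_exp hK.le ht0.le ht1 n)
  have hS : AEMeasurable (fun ω => ∑ i ∈ Finset.Icc 1 n, X i ω) μ :=
    (Finset.measurable_sum _ fun i hi => ((hadp i hi).mono (ℱ.le i)).measurable).aemeasurable
  have htail : ∀ x : ℝ, 0 < x → ∀ e ≤ (√(x + K) - √K) ^ 2,
      μ {ω | (∑ i ∈ Finset.Icc 1 n, X i ω) / n > x} ≤ ENNReal.ofReal (exp (-(n * e))) :=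
    fun x hx e he => calc
      _ ≤ μ {ω | n * x < ∑ i ∈ Finset.Icc 1 n, X i ω} := measure_mono fun ω (hω : x < _ / n) => by
          rw [mul_comm]; exact (lt_div_iff₀ (Nat.cast_pos.2 hn)).1 hω
      _ ≤ ENNReal.ofReal (exp (-(n * (√(x + K) - √K) ^ 2))) :=
          measure_mul_lt_le_of_lintegral_exp_le hS hK hx hmgf
      _ ≤ ENNReal.ofReal (exp (-(n * e))) := by gcongr
  refine ⟨hmgf, fun x hx => htail x hx _ le_rfl, fun x hx hxK => ?_, fun x hxK => ?_⟩
  · convert htail x hx _ (sq_div_le_sq_sqrt_add_sub_sqrt hx.le hK.le le_rfl hxK) using 4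
    ring
  · have hx : 0 < x := hK.trans hxK
    convert htail x hx _ (sq_div_le_sq_sqrt_add_sub_sqrt hx.le hK.le hxK.le le_rfl) using 4
    field_simp
end

section
/- For all constants K > 0 and x > 0, the supremum over t ∈ (0,1) of (t x − K t²/(1−t)) equals (√(x+K) − √K)². -/
/-! Writing `x = a² - b²` and `K = b²` with `a = √(x + K)`, `b = √K`, the identity
`(a - b)² (1 - t) - t (1 - t) (a² - b²) + b² t² = (a t - (a - b))²` bounds the objective by
`(a - b)²` on `t < 1`, with equality at `t = (a - b) / a`. -/

open Set

theorem mul_sq_sub_sq_sub_div_one_sub_le_sub_sq {a b t : ℝ} (ht : t < 1) :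
    t * (a ^ 2 - b ^ 2) - b ^ 2 * t ^ 2 / (1 - t) ≤ (a - b) ^ 2 := by
  have h1t : 0 < 1 - t := by linarith
  have key : t * (a ^ 2 - b ^ 2) - (a - b) ^ 2 ≤ b ^ 2 * t ^ 2 / (1 - t) := by
    rw [le_div_iff₀ h1t]
    nlinarith [sq_nonneg (a * t - (a - b))]
  linarith

theorem mul_sq_sub_sq_sub_div_one_sub_eq_sub_sq {a b : ℝ} (ha : a ≠ 0) :
    (a - b) / a * (a ^ 2 - b ^ 2) - b ^ 2 * ((a - b) / a) ^ 2 / (1 - (a - b) / a)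
      = (a - b) ^ 2 := by
  have h1t : 1 - (a - b) / a = b / a := by field_simp; ring
  rw [h1t]
  field_simp
  ring

theorem isGreatest_mul_sq_sub_sq_sub_div_one_sub {a b : ℝ} (hb : 0 < b) (hba : b < a) :
    IsGreatest ((fun t => t * (a ^ 2 - b ^ 2) - b ^ 2 * t ^ 2 / (1 - t)) '' Ioo 0 1)
      ((a - b) ^ 2) := by
  have ha : 0 < a := hb.trans hba
  refine ⟨⟨(a - b) / a, ⟨div_pos (by linarith) ha, ?_⟩,
    mul_sq_sub_sq_sub_div_one_sub_eq_sub_sq ha.ne'⟩, ?_⟩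
  · rw [div_lt_one ha]; linarith
  · rintro _ ⟨t, ht, rfl⟩
    exact mul_sq_sub_sq_sub_div_one_sub_le_sub_sq ht.2

/-- Lemma 2.6: the Legendre-type supremum `sup_{t ∈ (0,1)} (t x - K t² / (1 - t))`
equals `(√(x + K) - √K)²` for all `K, x > 0`. -/
theorem sup_legendre_bernstein (K x : ℝ) (hK : 0 < K) (hx : 0 < x) :
    sSup ((fun t => t * x - K * t ^ 2 / (1 - t)) '' Set.Ioo (0 : ℝ) 1) =
      (Real.sqrt (x + K) - Real.sqrt K) ^ 2 := by
  have hmax := isGreatest_mul_sq_sub_sq_sub_div_one_sub (Real.sqrt_pos.mpr hK)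
    (Real.sqrt_lt_sqrt hK.le (lt_add_of_pos_left K hx))
  rw [Real.sq_sqrt (by positivity), Real.sq_sqrt hK.le, add_sub_cancel_right] at hmax
  exact hmax.csSup_eq
end
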